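/- arXiv:math/0007041 — 4 statements merged into one kernel-verified Lean document; each statement's English description precedes it below -/
import Mathlib

section
/- For every p ∈ [1,∞] there is a constant K > 0 (one may take K = 3) such that for all natural numbers m ≤ n and all real numbers a_1, …, a_n one has ‖∑_{i=1}^m a_i φ_i‖_{L^p[0,1]} ≤ K · ‖∑_{i=1}^n a_i φ_i‖_{L^p[0,1]}. In other words, the Rademacher chaos of order 2, ordered according to the enumeration φ, satisfies the basic-sequence inequality in L^p[0,1] with a constant independent of m, n and the coefficients. -/
open MeasureTheory ENNReal

attribute [local instance] Classical.propDecidable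

/-- The Rademacher functions on `[0,1]`: `r k t = (-1)^⌊2^(k-1) t⌋` (for `k ≥ 1`). -/
noncomputable def rademacher (k : ℕ) (t : ℝ) : ℝ :=
  (-1 : ℝ) ^ ⌊(2 : ℝ) ^ (k - 1) * t⌋

/-- The enumeration of the Rademacher chaos of order 2:
`φ_{(j−1)(j−2)/2 + i} = r_i r_j` for `1 ≤ i < j`. -/
noncomputable def chaosEnum (m : ℕ) : ℝ → ℝ :=
  if h : ∃ p : ℕ × ℕ, 1 ≤ p.1 ∧ p.1 < p.2 ∧ (p.2 - 1) * (p.2 - 2) / 2 + p.1 = m then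
    fun t => rademacher h.choose.1 t * rademacher h.choose.2 t
  else 0

/-- Lebesgue measure on `[0,1]`. -/
noncomputable def lebI : Measure ℝ := volume.restrict (Set.Icc (0 : ℝ) 1)

/-!
Write the partial sums as Walsh polynomials `f = ∑ a_k r_{i_k} r_{j_k}`. If `φ_m = r_{i₀} r_J`,
the first `m` terms are those with `j_k < J` together with those with `j_k = J` and `i_k ≤ i₀`.
The former form the conditional expectation `E_{J-1} f` of `f` onto `r_1, …, r_{J-1}`, the
latter form `r_J E_{i₀} (r_J (f - E_{J-1} f))`. Each `E_D` is a composition of averages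
`(F + F ∘ σ) / 2` over measure-preserving flips `σ` of one binary digit, hence contracts `L^p`,
and multiplication by `r_J` is an isometry; so the partial sum has norm at most `3 ‖f‖_p`.
-/

open Finset
open scoped symmDiff

noncomputable section

namespace RademacherChaos

/-- Moves `t` by `± 2⁻ᵈ` inside its dyadic interval of length `2¹⁻ᵈ`: this flips the `d`-th
binary digit of `t` and no other, so for `d ≥ 1` it maps `[0, 1)` to itself. -/
def flipDigit (d : ℕ) (t : ℝ) : ℝ := t + (if Even ⌊(2 : ℝ) ^ d * t⌋ then 1 else -1) / 2 ^ d

lemma two_pow_mul_flipDigit (d : ℕ) (t : ℝ) :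
    2 ^ d * flipDigit d t =
      2 ^ d * t + ((if Even ⌊(2 : ℝ) ^ d * t⌋ then 1 else -1 : ℤ) : ℝ) := by
  rw [flipDigit, mul_add, mul_div_cancel₀ _ (by positivity)]
  push_cast
  rfl

lemma floor_two_pow_mul_flipDigit_of_le {d j : ℕ} (hdj : d ≤ j) (t : ℝ) :
    ⌊(2 : ℝ) ^ j * flipDigit d t⌋ =
      ⌊(2 : ℝ) ^ j * t⌋ + 2 ^ (j - d) * if Even ⌊(2 : ℝ) ^ d * t⌋ then 1 else -1 := by
  obtain ⟨e, rfl⟩ := Nat.exists_eq_add_of_le hdj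
  rw [← Int.floor_add_intCast, Nat.add_sub_cancel_left, pow_add, mul_comm ((2 : ℝ) ^ d),
    mul_assoc, two_pow_mul_flipDigit]
  push_cast
  ring_nf

lemma floor_two_pow_mul_eq_ediv {j d : ℕ} (hjd : j ≤ d) (x : ℝ) :
    ⌊(2 : ℝ) ^ j * x⌋ = ⌊(2 : ℝ) ^ d * x⌋ / 2 ^ (d - j) := by
  obtain ⟨e, rfl⟩ := Nat.exists_eq_add_of_le hjd
  have h := Int.floor_div_natCast ((2 : ℝ) ^ (j + e) * x) (2 ^ e)
  push_cast at h
  rw [Nat.add_sub_cancel_left, ← h, pow_add]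
  congr 1
  field_simp

lemma floor_two_pow_mul_flipDigit_of_lt {d j : ℕ} (hjd : j < d) (t : ℝ) :
    ⌊(2 : ℝ) ^ j * flipDigit d t⌋ = ⌊(2 : ℝ) ^ j * t⌋ := by
  obtain ⟨e, he⟩ : ∃ e, d - j = e + 1 := ⟨d - j - 1, by omega⟩
  rw [floor_two_pow_mul_eq_ediv hjd.le, floor_two_pow_mul_eq_ediv hjd.le,
    floor_two_pow_mul_flipDigit_of_le le_rfl, Nat.sub_self, pow_zero, one_mul, he, pow_succ',
    ← Int.ediv_ediv_of_nonneg zero_le_two, ← Int.ediv_ediv_of_nonneg zero_le_two]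
  congr 1
  split_ifs with h
  · obtain ⟨r, hr⟩ := h
    omega
  · obtain ⟨r, hr⟩ := Int.not_even_iff_odd.mp h
    omega

lemma rademacher_flipDigit {d : ℕ} (hd : 1 ≤ d) (k : ℕ) (t : ℝ) :
    rademacher k (flipDigit d t) = (if k = d + 1 then -1 else 1) * rademacher k t := by
  unfold rademacher
  rcases lt_or_ge (k - 1) d with hlt | hle
  · rw [floor_two_pow_mul_flipDigit_of_lt hlt, if_neg (by omega), one_mul]
  rw [floor_two_pow_mul_flipDigit_of_le hle, zpow_add₀ (by norm_num), mul_comm]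
  congr 1
  by_cases hk : k = d + 1
  · rw [if_pos hk, show k - 1 - d = 0 by omega]
    split_ifs <;> norm_num
  · obtain ⟨e, he⟩ : ∃ e, k - 1 - d = e + 1 := ⟨k - 1 - d - 1, by omega⟩
    rw [if_neg hk, he, pow_succ, Even.neg_one_zpow]
    exact (even_two.mul_left _).mul_right _

lemma measurableSet_even_floor (d : ℕ) : MeasurableSet {t : ℝ | Even ⌊(2 : ℝ) ^ d * t⌋} :=
  (measurable_const_mul _).floor (MeasurableSet.of_discrete (s := {n : ℤ | Even n}))

lemma measurable_flipDigit (d : ℕ) : Measurable (flipDigit d) :=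
  measurable_id.add
    ((Measurable.ite (measurableSet_even_floor d) measurable_const measurable_const).div_const _)

lemma even_floor_two_pow_mul_add_iff (d : ℕ) (t : ℝ) {ε : ℤ} (hε : Odd ε) :
    Even ⌊(2 : ℝ) ^ d * (t + ε / 2 ^ d)⌋ ↔ ¬Even ⌊(2 : ℝ) ^ d * t⌋ := by
  rw [mul_add, mul_div_cancel₀ _ (by positivity), Int.floor_add_intCast, Int.even_add]
  have := Int.not_even_iff_odd.mpr hε
  tauto

lemma measurePreserving_flipDigit_volume (d : ℕ) :
    MeasurePreserving (flipDigit d) volume volume := by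
  set A := {t : ℝ | Even ⌊(2 : ℝ) ^ d * t⌋}
  set h : ℝ := 1 / 2 ^ d
  have hA : MeasurableSet A := measurableSet_even_floor d
  have hup (t : ℝ) : t + h ∈ A ↔ t ∉ A := by
    simpa [A, h] using even_floor_two_pow_mul_add_iff d t odd_one
  have hdown (t : ℝ) : t + -h ∈ A ↔ t ∉ A := by
    simpa [A, h, neg_div] using even_floor_two_pow_mul_add_iff d t (odd_neg.mpr odd_one)
  have hflip (t : ℝ) : flipDigit d t = if t ∈ A then t + h else t + -h := by
    simp only [flipDigit, A, h, Set.mem_ofPred_eq]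
    split_ifs <;> ring
  have hpre (S : Set ℝ) :
      flipDigit d ⁻¹' S = (· + h) ⁻¹' (Aᶜ ∩ S) ∪ (· + -h) ⁻¹' (A ∩ S) := by
    ext t
    by_cases ht : t ∈ A <;> simp [hflip, ht, hup, hdown]
  refine ⟨measurable_flipDigit d, Measure.ext fun S hS => ?_⟩
  have hdisj : Disjoint ((· + h) ⁻¹' (Aᶜ ∩ S)) ((· + -h) ⁻¹' (A ∩ S)) :=
    Set.disjoint_left.mpr fun t h₁ h₂ => (hup t).not.mp h₁.1 ((hdown t).mp h₂.1)
  rw [Measure.map_apply (measurable_flipDigit d) hS, hpre,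
    measure_union hdisj (measurable_add_const _ (hA.inter hS)), measure_preimage_add_right,
    measure_preimage_add_right, Set.inter_comm, Set.inter_comm A, add_comm, ← Set.sdiff_eq,
    measure_inter_add_sdiff S hA]

lemma flipDigit_preimage_Ico {d : ℕ} (hd : 1 ≤ d) :
    flipDigit d ⁻¹' Set.Ico 0 1 = Set.Ico 0 1 := by
  ext t
  have h := floor_two_pow_mul_flipDigit_of_lt hd t
  simp only [pow_zero, one_mul] at h
  rw [Set.mem_preimage, ← Int.floor_eq_zero_iff, ← Int.floor_eq_zero_iff, h]

lemma measurePreserving_flipDigit {d : ℕ} (hd : 1 ≤ d) :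
    MeasurePreserving (flipDigit d) lebI lebI := by
  have h := (measurePreserving_flipDigit_volume d).restrict_preimage
    (measurableSet_Ico (a := (0 : ℝ)) (b := 1))
  rwa [flipDigit_preimage_Ico hd, Measure.restrict_congr_set Ico_ae_eq_Icc] at h

section Walsh

def walsh (s : Finset ℕ) (t : ℝ) : ℝ := ∏ k ∈ s, rademacher k t

def walshPoly {ι : Type*} (K : Finset ι) (b : ι → ℝ) (s : ι → Finset ℕ) (t : ℝ) : ℝ :=
  ∑ k ∈ K, b k * walsh (s k) t

variable {ι : Type*} {p : ℝ≥0∞}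

lemma measurable_rademacher (k : ℕ) : Measurable (rademacher k) :=
  measurable_from_top.comp (measurable_const_mul _).floor

lemma measurable_walshPoly (K : Finset ι) (b : ι → ℝ) (s : ι → Finset ℕ) :
    Measurable (walshPoly K b s) :=
  measurable_sum K fun _ _ =>
    measurable_const.mul (measurable_prod _ fun j _ => measurable_rademacher j)

lemma rademacher_mul_self (k : ℕ) (t : ℝ) : rademacher k t * rademacher k t = 1 := by
  rw [rademacher, ← zpow_add₀ (by norm_num), Even.neg_one_zpow ⟨_, rfl⟩]

lemma abs_rademacher (k : ℕ) (t : ℝ) : |rademacher k t| = 1 := by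
  simp [rademacher]

lemma eLpNorm_rademacher_mul {μ : Measure ℝ} (k : ℕ) (g : ℝ → ℝ) :
    eLpNorm (fun t => rademacher k t * g t) p μ = eLpNorm g p μ :=
  eLpNorm_congr_norm_ae <| .of_forall fun t => by
    rw [norm_mul, Real.norm_eq_abs, abs_rademacher, one_mul]

lemma walsh_flipDigit {d : ℕ} (hd : 1 ≤ d) (s : Finset ℕ) (t : ℝ) :
    walsh s (flipDigit d t) = (if d + 1 ∈ s then -1 else 1) * walsh s t := by
  simp only [walsh, rademacher_flipDigit hd, prod_mul_distrib, prod_ite_eq']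

lemma walsh_symmDiff_singleton (s : Finset ℕ) (j : ℕ) (t : ℝ) :
    walsh (s ∆ {j}) t = rademacher j t * walsh s t := by
  by_cases hj : j ∈ s
  · rw [symmDiff_of_ge (singleton_subset_iff.2 hj), sdiff_singleton_eq_erase, walsh, walsh,
      ← mul_prod_erase s _ hj, ← mul_assoc, rademacher_mul_self, one_mul]
  · rw [(disjoint_singleton_right.2 hj).symmDiff_eq_sup, sup_eq_union, union_singleton, walsh,
      walsh, prod_insert hj]

lemma walshPoly_symmDiff_singleton (K : Finset ι) (b : ι → ℝ) (s : ι → Finset ℕ) (j : ℕ)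
    (t : ℝ) : walshPoly K b (fun k => s k ∆ {j}) t = rademacher j t * walshPoly K b s t := by
  simp only [walshPoly, walsh_symmDiff_singleton, mul_sum, mul_left_comm]

lemma walshPoly_filter_notMem {d : ℕ} (hd : 1 ≤ d) (K : Finset ι) (b : ι → ℝ)
    (s : ι → Finset ℕ) (t : ℝ) :
    walshPoly {k ∈ K | d + 1 ∉ s k} b s t =
      (walshPoly K b s t + walshPoly K b s (flipDigit d t)) / 2 := by
  simp only [walshPoly, walsh_flipDigit hd, sum_filter, ← sum_add_distrib, sum_div]
  refine sum_congr rfl fun k _ => ?_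
  split_ifs <;> ring

lemma eLpNorm_average_flipDigit_le (hp : 1 ≤ p) {d : ℕ} (hd : 1 ≤ d) {F : ℝ → ℝ}
    (hF : AEStronglyMeasurable F lebI) :
    eLpNorm (fun t => (F t + F (flipDigit d t)) / 2) p lebI ≤ eLpNorm F p lebI := by
  have hflip := measurePreserving_flipDigit hd
  have hmean : (fun t => (F t + F (flipDigit d t)) / 2) = (2 : ℝ)⁻¹ • (F + F ∘ flipDigit d) := by
    ext t; simp [div_eq_inv_mul]
  calc eLpNorm (fun t => (F t + F (flipDigit d t)) / 2) p lebI
      = 2⁻¹ * eLpNorm (F + F ∘ flipDigit d) p lebI := by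
        rw [hmean, eLpNorm_const_smul]
        simp [Real.enorm_eq_ofReal]
    _ ≤ 2⁻¹ * (eLpNorm F p lebI + eLpNorm (F ∘ flipDigit d) p lebI) :=
        by gcongr; exact eLpNorm_add_le hF (hF.comp_measurePreserving hflip) hp
    _ = eLpNorm F p lebI := by
        rw [eLpNorm_comp_measurePreserving hF hflip, ← two_mul, ← mul_assoc,
          ENNReal.inv_mul_cancel two_ne_zero ENNReal.ofNat_ne_top, one_mul]

lemma eLpNorm_walshPoly_filter_notMem_le (hp : 1 ≤ p) {l : ℕ} (hl : 2 ≤ l) (K : Finset ι)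
    (b : ι → ℝ) (s : ι → Finset ℕ) :
    eLpNorm (walshPoly {k ∈ K | l ∉ s k} b s) p lebI ≤ eLpNorm (walshPoly K b s) p lebI := by
  obtain ⟨d, rfl⟩ : ∃ d, l = d + 1 := ⟨l - 1, by omega⟩
  have hd : 1 ≤ d := by omega
  rw [funext (walshPoly_filter_notMem hd K b s)]
  exact eLpNorm_average_flipDigit_le hp hd (measurable_walshPoly K b s).aestronglyMeasurable

lemma eLpNorm_walshPoly_filter_disjoint_le (hp : 1 ≤ p) {L : Finset ℕ} (hL : ∀ l ∈ L, 2 ≤ l)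
    (K : Finset ι) (b : ι → ℝ) (s : ι → Finset ℕ) :
    eLpNorm (walshPoly {k ∈ K | Disjoint (s k) L} b s) p lebI ≤
      eLpNorm (walshPoly K b s) p lebI := by
  induction L using Finset.induction_on with
  | empty => simp
  | insert l L _ ih =>
    have hfilter : {k ∈ K | Disjoint (s k) (insert l L)} =
        {k ∈ {k ∈ K | Disjoint (s k) L} | l ∉ s k} := by
      rw [filter_filter]
      exact filter_congr fun k _ => by rw [disjoint_insert_right, and_comm]
    rw [hfilter]
    exact (eLpNorm_walshPoly_filter_notMem_le hp (hL l (mem_insert_self l L)) _ b s).trans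
      (ih fun l' hl' => hL l' (mem_insert_of_mem hl'))

lemma eLpNorm_walshPoly_filter_lt_le (hp : 1 ≤ p) {D : ℕ} (hD : 2 ≤ D) (K : Finset ι)
    (b : ι → ℝ) (s : ι → Finset ℕ) :
    eLpNorm (walshPoly {k ∈ K | ∀ l ∈ s k, l < D} b s) p lebI ≤
      eLpNorm (walshPoly K b s) p lebI := by
  have hfilter : {k ∈ K | ∀ l ∈ s k, l < D} =
      {k ∈ K | Disjoint (s k) {l ∈ K.biUnion s | D ≤ l}} := filter_congr fun k hk => by
    simp only [disjoint_left, mem_filter, mem_biUnion, not_and, not_le]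
    exact ⟨fun h l hl _ => h l hl, fun h l hl => h hl ⟨k, hk, hl⟩⟩
  rw [hfilter]
  exact eLpNorm_walshPoly_filter_disjoint_le hp (fun l hl => hD.trans (mem_filter.1 hl).2) K b s

lemma eLpNorm_walshPoly_filter_le_three_mul (hp : 1 ≤ p) {D J : ℕ} (hD : 2 ≤ D) (hDJ : D ≤ J)
    (K : Finset ι) (b : ι → ℝ) (s : ι → Finset ℕ) :
    eLpNorm (walshPoly {k ∈ K | (∀ l ∈ s k, l < J) ∨ ∀ l ∈ s k ∆ {J}, l < D} b s) p lebI ≤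
      3 * eLpNorm (walshPoly K b s) p lebI := by
  set f := walshPoly K b s
  set low := walshPoly {k ∈ K | ∀ l ∈ s k, l < J} b s
  set high := walshPoly {k ∈ K | ¬∀ l ∈ s k, l < J} b s
  set mid := walshPoly {k ∈ {k ∈ K | ¬∀ l ∈ s k, l < J} | ∀ l ∈ s k ∆ {J}, l < D} b
    fun k => s k ∆ {J}
  have hmeas (K' : Finset ι) (s' : ι → Finset ℕ) :
      AEStronglyMeasurable (walshPoly K' b s') lebI :=
    (measurable_walshPoly K' b s').aestronglyMeasurable
  have hsplit : walshPoly {k ∈ K | (∀ l ∈ s k, l < J) ∨ ∀ l ∈ s k ∆ {J}, l < D} b s =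
      low + fun t => rademacher J t * mid t := by
    ext t
    simp only [low, mid, Pi.add_apply, walshPoly_symmDiff_singleton, ← mul_assoc,
      rademacher_mul_self, one_mul]
    rw [walshPoly, walshPoly, walshPoly,
      ← sum_filter_add_sum_filter_not _ fun k => ∀ l ∈ s k, l < J, filter_filter, filter_filter,
      filter_filter]
    congr 1 <;> exact sum_congr (filter_congr fun k _ => by tauto) fun _ _ => rfl
  have hhigh : high = f - low := by
    ext t
    exact eq_sub_of_add_eq' (sum_filter_add_sum_filter_not _ _ _)
  have hlow : eLpNorm low p lebI ≤ eLpNorm f p lebI :=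
    eLpNorm_walshPoly_filter_lt_le hp (hD.trans hDJ) K b s
  have hmid : eLpNorm mid p lebI ≤ eLpNorm f p lebI + eLpNorm low p lebI :=
    calc eLpNorm mid p lebI
        ≤ eLpNorm (walshPoly {k ∈ K | ¬∀ l ∈ s k, l < J} b fun k => s k ∆ {J}) p lebI :=
          eLpNorm_walshPoly_filter_lt_le hp hD _ b _
      _ = eLpNorm high p lebI := by
          rw [funext (walshPoly_symmDiff_singleton _ b s J), eLpNorm_rademacher_mul]
      _ ≤ eLpNorm f p lebI + eLpNorm low p lebI :=
          hhigh ▸ eLpNorm_sub_le (hmeas _ _) (hmeas _ _) hp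
  calc eLpNorm (walshPoly {k ∈ K | (∀ l ∈ s k, l < J) ∨ ∀ l ∈ s k ∆ {J}, l < D} b s) p lebI
      ≤ eLpNorm low p lebI + eLpNorm mid p lebI := by
        rw [hsplit, ← eLpNorm_rademacher_mul (p := p) (μ := lebI) J mid]
        exact eLpNorm_add_le (hmeas _ _)
          ((measurable_rademacher J).mul (measurable_walshPoly _ b _)).aestronglyMeasurable hp
    _ ≤ eLpNorm f p lebI + (eLpNorm f p lebI + eLpNorm f p lebI) := by
        gcongr
        exact hmid.trans (by gcongr)
    _ = 3 * eLpNorm f p lebI := by ring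

end Walsh

def pairIndex (q : ℕ × ℕ) : ℕ := (q.2 - 1) * (q.2 - 2) / 2 + q.1

lemma pairIndex_snd_succ (i j : ℕ) : pairIndex (i, j + 1) = pairIndex (i, j) + (j - 1) := by
  rcases j with _ | _ | j
  · rfl
  · rfl
  · show (j + 2) * (j + 1) / 2 + i = (j + 1) * j / 2 + i + (j + 1)
    rw [show (j + 2) * (j + 1) = (j + 1) * j + (j + 1) * 2 by ring,
      Nat.add_mul_div_right _ _ two_pos]
    omega

lemma pairIndex_lt_of_snd_lt {q q' : ℕ × ℕ} (hq : q.1 < q.2) (hq' : 1 ≤ q'.1)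
    (h : q.2 < q'.2) : pairIndex q < pairIndex q' := by
  have hmono : Monotone fun j => pairIndex (0, j) :=
    monotone_nat_of_le_succ fun j => by simp only [pairIndex_snd_succ]; omega
  have hnext : pairIndex q ≤ pairIndex (0, q.2 + 1) := by
    rw [pairIndex_snd_succ]; simp only [pairIndex]; omega
  have hle : pairIndex (0, q.2 + 1) ≤ pairIndex (0, q'.2) := hmono h
  simp only [pairIndex] at hnext hle ⊢
  omega

lemma pairIndex_le_iff {q q' : ℕ × ℕ} (hq : 1 ≤ q.1 ∧ q.1 < q.2)
    (hq' : 1 ≤ q'.1 ∧ q'.1 < q'.2) :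
    pairIndex q ≤ pairIndex q' ↔ q.2 < q'.2 ∨ q.2 = q'.2 ∧ q.1 ≤ q'.1 := by
  rcases lt_trichotomy q.2 q'.2 with h | h | h
  · simp only [h, true_or, iff_true]
    exact (pairIndex_lt_of_snd_lt hq.2 hq'.1 h).le
  · simp only [pairIndex, h, lt_irrefl, true_and, false_or]
    omega
  · have := pairIndex_lt_of_snd_lt hq'.2 hq.1 h
    omega

lemma exists_pairIndex_eq {k : ℕ} (hk : 1 ≤ k) :
    ∃ q : ℕ × ℕ, 1 ≤ q.1 ∧ q.1 < q.2 ∧ pairIndex q = k := by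
  induction k with
  | zero => omega
  | succ k ih =>
    rcases Nat.eq_zero_or_pos k with rfl | hk
    · exact ⟨(1, 2), le_rfl, one_lt_two, rfl⟩
    obtain ⟨⟨i, j⟩, hi, hij, rfl⟩ := ih hk
    by_cases hnext : i + 1 < j
    · exact ⟨(i + 1, j), by omega, hnext, rfl⟩
    · refine ⟨(1, j + 1), le_rfl, by omega, ?_⟩
      rw [pairIndex_snd_succ]
      simp only [pairIndex] at *
      omega

/-- The same choice as in `chaosEnum`, so that no uniqueness of the pair is needed. -/
def chaosPair (k : ℕ) : ℕ × ℕ :=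
  if h : ∃ q : ℕ × ℕ, 1 ≤ q.1 ∧ q.1 < q.2 ∧ pairIndex q = k then h.choose else 0

lemma chaosPair_spec {k : ℕ} (hk : 1 ≤ k) :
    1 ≤ (chaosPair k).1 ∧ (chaosPair k).1 < (chaosPair k).2 ∧ pairIndex (chaosPair k) = k := by
  rw [chaosPair, dif_pos (exists_pairIndex_eq hk)]
  exact (exists_pairIndex_eq hk).choose_spec

def chaosSupport (k : ℕ) : Finset ℕ := {(chaosPair k).1, (chaosPair k).2}

lemma chaosEnum_eq_walsh {k : ℕ} (hk : 1 ≤ k) : chaosEnum k = walsh (chaosSupport k) := by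
  have h : ∃ p : ℕ × ℕ, 1 ≤ p.1 ∧ p.1 < p.2 ∧ (p.2 - 1) * (p.2 - 2) / 2 + p.1 = k :=
    exists_pairIndex_eq hk
  ext t
  rw [walsh, chaosSupport, prod_pair (chaosPair_spec hk).2.1.ne, chaosEnum, dif_pos h,
    chaosPair, dif_pos (exists_pairIndex_eq hk)]
  rfl

lemma sum_chaosEnum_eq_walshPoly (a : ℕ → ℝ) (n : ℕ) :
    (fun t => ∑ i ∈ Icc 1 n, a i * chaosEnum i t) = walshPoly (Icc 1 n) a chaosSupport :=
  funext fun _ => sum_congr rfl fun k hk => by rw [chaosEnum_eq_walsh (mem_Icc.1 hk).1]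

lemma forall_lt_or_forall_symmDiff_lt_iff {i j i₀ J : ℕ} (hij : i < j) (hJ : i₀ < J) :
    ((∀ l ∈ ({i, j} : Finset ℕ), l < J) ∨ ∀ l ∈ ({i, j} : Finset ℕ) ∆ {J}, l < i₀ + 1) ↔
      j < J ∨ j = J ∧ i ≤ i₀ := by
  simp only [mem_symmDiff, mem_insert, mem_singleton, forall_eq_or_imp, forall_eq]
  constructor
  · rintro (h | h)
    · omega
    · have := h J
      have := h i
      have := h j
      omega
  · rintro (h | ⟨rfl, h⟩)
    · omega
    · exact Or.inr fun l hl => by omega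

lemma Icc_eq_filter_chaosSupport {m n : ℕ} (hm : 1 ≤ m) (hmn : m ≤ n) :
    Icc 1 m = {k ∈ Icc 1 n | (∀ l ∈ chaosSupport k, l < (chaosPair m).2) ∨
      ∀ l ∈ chaosSupport k ∆ {(chaosPair m).2}, l < (chaosPair m).1 + 1} := by
  obtain ⟨hm₁, hm₂, hm₃⟩ := chaosPair_spec hm
  have key (k : ℕ) (hk : 1 ≤ k) : k ≤ m ↔ (∀ l ∈ chaosSupport k, l < (chaosPair m).2) ∨
      ∀ l ∈ chaosSupport k ∆ {(chaosPair m).2}, l < (chaosPair m).1 + 1 := by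
    obtain ⟨hk₁, hk₂, hk₃⟩ := chaosPair_spec hk
    rw [chaosSupport, forall_lt_or_forall_symmDiff_lt_iff hk₂ hm₂,
      ← pairIndex_le_iff ⟨hk₁, hk₂⟩ ⟨hm₁, hm₂⟩, hk₃, hm₃]
  ext k
  simp only [mem_Icc, mem_filter]
  constructor
  · rintro ⟨hk, hkm⟩
    exact ⟨⟨hk, hkm.trans hmn⟩, (key k hk).1 hkm⟩
  · rintro ⟨⟨hk, -⟩, h⟩
    exact ⟨hk, (key k hk).2 h⟩

end RademacherChaos

end

open RademacherChaos

/-- The Rademacher chaos of order 2, ordered according to the enumeration `φ`,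
satisfies the basic-sequence inequality in `L^p[0,1]`, for every `p ∈ [1,∞]`,
with the constant `K = 3` independent of `m`, `n` and the coefficients. -/
theorem chaos_basic_sequence (p : ℝ≥0∞) (hp : 1 ≤ p)
    (m n : ℕ) (hmn : m ≤ n) (a : ℕ → ℝ) :
    eLpNorm (fun t => ∑ i ∈ Finset.Icc 1 m, a i * chaosEnum i t) p lebI ≤
      3 * eLpNorm (fun t => ∑ i ∈ Finset.Icc 1 n, a i * chaosEnum i t) p lebI := by
  rcases Nat.eq_zero_or_pos m with rfl | hm
  · simp
  obtain ⟨hi₀, hi₀J, -⟩ := chaosPair_spec hm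
  rw [sum_chaosEnum_eq_walshPoly, sum_chaosEnum_eq_walshPoly, Icc_eq_filter_chaosSupport hm hmn]
  exact eLpNorm_walshPoly_filter_le_three_mul hp (by omega) hi₀J _ a chaosSupport
end

section
/- For every p ∈ [1, ∞) there is a constant C > 0 such that for every n ≥ 2 and all real numbers a_{i,j} (1 ≤ i < j ≤ n), ∫₀¹ ‖ ∑_{1≤i<j≤n} ρ_{i,j}(u) a_{i,j} r_i r_j ‖_{L^p[0,1]} du ≤ C · ‖ ∑_{1≤i<j≤n} a_{i,j} r_i r_j ‖_{L^p[0,1]}. In other words, the Rademacher chaos of order 2, together with its biorthogonal coefficient functionals, is a system of random unconditional convergence (RUC system) in L^p[0,1]. -/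
/-!
Write `F = ∑_{i<j} a_{ij} r_i r_j` and `S = ∑_{i<j} a_{ij}²`. For fixed `t`, the randomized sum
`u ↦ ∑ ρ_{ij}(u) a_{ij} r_i(t) r_j(t)` is a Rademacher sum in `u` (the indices of the `ρ_{ij}`
are distinct) whose squared coefficients add up to `S`. Khintchine's inequality for the
`2m`-th moment, Fubini and Jensen therefore bound the averaged `L^p`-norm by `2^m √S` when
`p ≤ 2m`.

Conversely, `F` is a dyadic martingale: `F_{N+1} = F_N + r_{N+1} G_{N+1}`, where `F_N` and
`G_{N+1} = ∑_{i ≤ N} a_{i,N+1} r_i` are constant on the dyadic intervals of length `2^{1-N}`,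
on each of which `r_{N+1}` is `1` on the left half and `-1` on the right half. This gives
`‖F‖₂² = S` and `‖F‖₄² ≤ 48 S`, and two Cauchy–Schwarz steps turn the latter into
`√S ≤ 48 ‖F‖₁ ≤ 48 ‖F‖_p`.
-/

open MeasureTheory ENNReal

/-- The Rademacher sequence reindexed by pairs: `ρ_{i,j}(u) = r_{(j−1)(j−2)/2+i}(u)`. -/
noncomputable def rho (i j : ℕ) (u : ℝ) : ℝ :=
  rademacher ((j - 1) * (j - 2) / 2 + i) u

lemma integral_mul_le_sqrt_mul_sqrt {α : Type*} [MeasurableSpace α] {μ : Measure α} {f g : α → ℝ}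
    (hf₀ : 0 ≤ᵐ[μ] f) (hg₀ : 0 ≤ᵐ[μ] g) (hf : MemLp f 2 μ) (hg : MemLp g 2 μ) :
    ∫ x, f x * g x ∂μ ≤ √(∫ x, f x ^ 2 ∂μ) * √(∫ x, g x ^ 2 ∂μ) := by
  have := integral_mul_le_Lp_mul_Lq_of_nonneg Real.HolderConjugate.two_two hf₀ hg₀
    (by simpa using hf) (by simpa using hg)
  simpa [Real.sqrt_eq_rpow, Real.rpow_two] using this

section BoundedFunction

variable {α : Type*} [MeasurableSpace α] {μ : Measure α} [IsFiniteMeasure μ] {f : α → ℝ} {C : ℝ}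

lemma integral_sq_le_sqrt_mul_sqrt (hf : AEStronglyMeasurable f μ) (hC : ∀ᵐ x ∂μ, |f x| ≤ C) :
    ∫ x, f x ^ 2 ∂μ ≤ √(∫ x, |f x| ∂μ) * √(∫ x, |f x| ^ 3 ∂μ) := by
  have e₁ : ∀ x, √|f x| * (|f x| * √|f x|) = f x ^ 2 := fun x => by
    rw [mul_left_comm, Real.mul_self_sqrt (abs_nonneg _), ← sq, sq_abs]
  have e₂ : ∀ x, √|f x| ^ 2 = |f x| := fun x => Real.sq_sqrt (abs_nonneg _)
  have e₃ : ∀ x, (|f x| * √|f x|) ^ 2 = |f x| ^ 3 := fun x => by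
    rw [mul_pow, e₂]
    ring
  have := integral_mul_le_sqrt_mul_sqrt (f := fun x => √|f x|) (g := fun x => |f x| * √|f x|)
    (ae_of_all _ fun x => Real.sqrt_nonneg _) (ae_of_all _ fun x => by positivity)
    (MemLp.of_bound (by fun_prop) √C <| hC.mono fun x hx => by
      rw [Real.norm_of_nonneg (Real.sqrt_nonneg _)]
      exact Real.sqrt_le_sqrt hx)
    (MemLp.of_bound (by fun_prop) (C * √C) <| hC.mono fun x hx => by
      rw [Real.norm_of_nonneg (by positivity)]
      exact mul_le_mul hx (Real.sqrt_le_sqrt hx) (Real.sqrt_nonneg _) ((abs_nonneg _).trans hx))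
  simpa only [e₁, e₂, e₃] using this

lemma integral_abs_pow_three_le_sqrt_mul_sqrt (hf : AEStronglyMeasurable f μ)
    (hC : ∀ᵐ x ∂μ, |f x| ≤ C) :
    ∫ x, |f x| ^ 3 ∂μ ≤ √(∫ x, f x ^ 2 ∂μ) * √(∫ x, f x ^ 4 ∂μ) := by
  have e : ∀ x, |f x| * f x ^ 2 = |f x| ^ 3 := fun x => by
    rw [← sq_abs]
    ring
  have := integral_mul_le_sqrt_mul_sqrt (f := fun x => |f x|) (g := fun x => f x ^ 2)
    (ae_of_all _ fun x => abs_nonneg _) (ae_of_all _ fun x => sq_nonneg _)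
    (MemLp.of_bound (by fun_prop) C <| hC.mono fun x hx => by rwa [Real.norm_eq_abs, abs_abs])
    (MemLp.of_bound (by fun_prop) (C ^ 2) <| hC.mono fun x hx => by
      rw [Real.norm_eq_abs, abs_pow]
      exact pow_le_pow_left₀ (abs_nonneg _) hx 2)
  simpa only [e, sq_abs, ← pow_mul] using this

lemma sqrt_integral_sq_le_mul_integral_abs (hf : AEStronglyMeasurable f μ)
    (hC : ∀ᵐ x ∂μ, |f x| ≤ C) {K : ℝ} (hK : 0 ≤ K)
    (h4 : √(∫ x, f x ^ 4 ∂μ) ≤ K * ∫ x, f x ^ 2 ∂μ) :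
    √(∫ x, f x ^ 2 ∂μ) ≤ K * ∫ x, |f x| ∂μ := by
  set S := ∫ x, f x ^ 2 ∂μ
  set A := ∫ x, |f x| ∂μ
  set B := ∫ x, |f x| ^ 3 ∂μ
  have hS : 0 ≤ S := integral_nonneg fun x => sq_nonneg _
  have hA : 0 ≤ A := integral_nonneg fun x => abs_nonneg _
  have hB : 0 ≤ B := integral_nonneg fun x => by positivity
  have hBS : B ≤ √S * (K * S) := (integral_abs_pow_three_le_sqrt_mul_sqrt hf hC).trans
    (mul_le_mul_of_nonneg_left h4 (Real.sqrt_nonneg _))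
  have hs : √S ^ 2 = S := Real.sq_sqrt hS
  set s := √S
  have h2 : s ^ 4 ≤ K * A * s ^ 3 := by
    calc s ^ 4 = S ^ 2 := by rw [← hs]; ring
      _ ≤ (√A * √B) ^ 2 := pow_le_pow_left₀ hS (integral_sq_le_sqrt_mul_sqrt hf hC) 2
      _ = A * B := by rw [mul_pow, Real.sq_sqrt hA, Real.sq_sqrt hB]
      _ ≤ A * (s * (K * S)) := mul_le_mul_of_nonneg_left hBS hA
      _ = K * A * s ^ 3 := by rw [← hs]; ring
  rcases (Real.sqrt_nonneg S).eq_or_lt with h0 | hpos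
  · rw [show s = 0 from h0.symm]
    positivity
  · exact le_of_mul_le_mul_right (by linarith : s * s ^ 3 ≤ K * A * s ^ 3) (pow_pos hpos 3)

end BoundedFunction

lemma lintegral_le_rpow_lintegral_rpow {α : Type*} [MeasurableSpace α] {μ : Measure α}
    [IsProbabilityMeasure μ] {g : α → ℝ≥0∞} (hg : AEMeasurable g μ) {r : ℝ} (hr : 1 ≤ r) :
    ∫⁻ x, g x ∂μ ≤ (∫⁻ x, g x ^ r ∂μ) ^ (1 / r) := by
  have := eLpNorm_le_eLpNorm_of_exponent_le (μ := μ) (p := 1) (q := ENNReal.ofReal r)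
    (by simpa using hr) hg.aestronglyMeasurable
  rw [eLpNorm_one_eq_lintegral_enorm, eLpNorm_eq_lintegral_rpow_enorm_toReal
    (by simp; linarith) (by simp), ENNReal.toReal_ofReal (by linarith)] at this
  simpa using this

theorem lintegral_eLpNorm_le_rpow {α β : Type*} [MeasurableSpace α] [MeasurableSpace β]
    {μ : Measure α} {ν : Measure β} [IsProbabilityMeasure μ] [IsProbabilityMeasure ν]
    {f : α → β → ℝ} (hf : Measurable (Function.uncurry f)) {p : ℝ≥0∞} {r : ℝ} (hr : 1 ≤ r)
    (hpr : p ≤ ENNReal.ofReal r) {B : ℝ≥0∞} (hB : ∀ y, ∫⁻ x, ‖f x y‖ₑ ^ r ∂μ ≤ B) :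
    ∫⁻ x, eLpNorm (f x) p ν ∂μ ≤ B ^ (1 / r) := by
  have hfr : Measurable fun z : α × β => ‖f z.1 z.2‖ₑ ^ r := hf.enorm.pow_const r
  have hnorm : ∀ x, eLpNorm (f x) p ν ≤ (∫⁻ y, ‖f x y‖ₑ ^ r ∂ν) ^ (1 / r) := fun x =>
    (eLpNorm_le_eLpNorm_of_exponent_le (f := f x) hpr
      (hf.comp measurable_prodMk_left).aestronglyMeasurable).trans_eq
      (by rw [eLpNorm_eq_lintegral_rpow_enorm_toReal (by simp; linarith) (by simp),
        ENNReal.toReal_ofReal (by linarith)])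
  calc ∫⁻ x, eLpNorm (f x) p ν ∂μ ≤ ∫⁻ x, (∫⁻ y, ‖f x y‖ₑ ^ r ∂ν) ^ (1 / r) ∂μ :=
        lintegral_mono hnorm
    _ ≤ (∫⁻ x, ((∫⁻ y, ‖f x y‖ₑ ^ r ∂ν) ^ (1 / r)) ^ r ∂μ) ^ (1 / r) :=
        lintegral_le_rpow_lintegral_rpow
          ((hfr.lintegral_prod_right'.pow_const _).aemeasurable) hr
    _ = (∫⁻ y, ∫⁻ x, ‖f x y‖ₑ ^ r ∂μ ∂ν) ^ (1 / r) := by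
        simp_rw [← ENNReal.rpow_mul, one_div_mul_cancel (by linarith : r ≠ 0), ENNReal.rpow_one]
        rw [lintegral_lintegral_swap hfr.aemeasurable]
    _ ≤ B ^ (1 / r) := by
        gcongr
        exact (lintegral_mono hB).trans (by simp)

lemma floor_two_pow_mul_eq_div (x : ℝ) (d k : ℕ) :
    ⌊(2 : ℝ) ^ d * x⌋ = ⌊(2 : ℝ) ^ (d + k) * x⌋ / (2 ^ k : ℕ) := by
  rw [← Int.floor_div_natCast]
  congr 1
  push_cast
  field_simp
  ring

lemma floor_two_pow_mul_natCast_div (d M : ℕ) : ⌊(2 : ℝ) ^ d * (M / 2 ^ d)⌋ = M := by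
  rw [mul_div_cancel₀ _ (by positivity), Int.floor_natCast]

lemma Finset.sum_range_two_mul {M : Type*} [AddCommMonoid M] (f : ℕ → M) (n : ℕ) :
    ∑ k ∈ Finset.range (2 * n), f k = ∑ j ∈ Finset.range n, (f (2 * j) + f (2 * j + 1)) := by
  induction n with
  | zero => simp
  | succ n ih => rw [Nat.mul_succ, Finset.sum_range_succ, Finset.sum_range_succ, ih,
      Finset.sum_range_succ, add_assoc]

lemma add_pow_add_sub_pow_div_two {K : Type*} [Field K] [CharZero K] (x y : K) (l : ℕ) :
    ((x + y) ^ (2 * l) + (x - y) ^ (2 * l)) / 2 =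
      ∑ i ∈ Finset.range (l + 1),
        ((2 * l).choose (2 * i) : K) * x ^ (2 * i) * y ^ (2 * (l - i)) := by
  have hodd : ∀ i < l, (-y) ^ (2 * l - (2 * i + 1)) = -y ^ (2 * l - (2 * i + 1)) := fun i hi =>
    Odd.neg_pow ⟨l - i - 1, by omega⟩ y
  have heven : ∀ i ≤ l, (-y) ^ (2 * l - 2 * i) = y ^ (2 * l - 2 * i) := fun i hi =>
    Even.neg_pow ⟨l - i, by omega⟩ y
  rw [sub_eq_add_neg, add_pow, add_pow, ← Finset.sum_add_distrib, Finset.sum_range_succ,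
    Finset.sum_range_two_mul, Finset.sum_range_succ _ l, add_div, Finset.sum_div]
  simp_rw [Nat.mul_sub]
  congr 1
  · refine Finset.sum_congr rfl fun i hi => ?_
    rw [Finset.mem_range] at hi
    rw [hodd i hi, heven i hi.le]
    ring
  · rw [heven l le_rfl]
    ring

lemma choose_mul_four_pow_le {i l : ℕ} (hil : i ≤ l) :
    (2 * l).choose (2 * i) * 4 ^ (i * i) ≤ l.choose i * 4 ^ (l * l) := by
  rcases hil.eq_or_lt with rfl | hil
  · simp
  calc (2 * l).choose (2 * i) * 4 ^ (i * i) ≤ 4 ^ l * 4 ^ (i * i) := by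
        gcongr
        exact (Nat.choose_le_two_pow _ _).trans_eq (by rw [pow_mul]; norm_num)
    _ ≤ 1 * 4 ^ (l * l) := by
        rw [← pow_add, one_mul]
        exact Nat.pow_le_pow_right (by norm_num) (by nlinarith)
    _ ≤ l.choose i * 4 ^ (l * l) := by
        gcongr
        exact Nat.choose_pos hil.le

instance isProbabilityMeasure_lebI : IsProbabilityMeasure lebI :=
  ⟨by simp [lebI, Real.volume_Icc]⟩

def IsDyadicStep (d : ℕ) (g : ℝ → ℝ) : Prop :=
  ∀ x y, ⌊(2 : ℝ) ^ d * x⌋ = ⌊(2 : ℝ) ^ d * y⌋ → g x = g y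

namespace IsDyadicStep

variable {d : ℕ} {f g : ℝ → ℝ}

lemma const (d : ℕ) (c : ℝ) : IsDyadicStep d fun _ => c := fun _ _ _ => rfl

lemma comp (φ : ℝ → ℝ) (hg : IsDyadicStep d g) : IsDyadicStep d fun x => φ (g x) :=
  fun x y h => congrArg φ (hg x y h)

lemma comp₂ (φ : ℝ → ℝ → ℝ) (hf : IsDyadicStep d f) (hg : IsDyadicStep d g) :
    IsDyadicStep d fun x => φ (f x) (g x) :=
  fun x y h => congrArg₂ φ (hf x y h) (hg x y h)

lemma add (hf : IsDyadicStep d f) (hg : IsDyadicStep d g) : IsDyadicStep d fun x => f x + g x :=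
  hf.comp₂ (· + ·) hg

lemma mul (hf : IsDyadicStep d f) (hg : IsDyadicStep d g) : IsDyadicStep d fun x => f x * g x :=
  hf.comp₂ (· * ·) hg

lemma sum {ι : Type*} {s : Finset ι} {f : ι → ℝ → ℝ} (hf : ∀ i ∈ s, IsDyadicStep d (f i)) :
    IsDyadicStep d fun x => ∑ i ∈ s, f i x :=
  fun x y h => Finset.sum_congr rfl fun i hi => hf i hi x y h

lemma mono {e : ℕ} (hde : d ≤ e) (hg : IsDyadicStep d g) : IsDyadicStep e g := by
  obtain ⟨k, rfl⟩ := Nat.exists_eq_add_of_le hde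
  intro x y h
  apply hg
  rw [floor_two_pow_mul_eq_div x d k, floor_two_pow_mul_eq_div y d k, h]

lemma apply_eq (hg : IsDyadicStep d g) (x : ℝ) : g x = g (⌊(2 : ℝ) ^ d * x⌋ / 2 ^ d) :=
  hg _ _ (by rw [mul_div_cancel₀ _ (by positivity), Int.floor_intCast])

lemma measurable (hg : IsDyadicStep d g) : Measurable g := by
  rw [funext hg.apply_eq]
  exact (measurable_of_countable fun k : ℤ => g (k / 2 ^ d)).comp
    (Int.measurable_floor.comp (measurable_const_mul _))

lemma exists_bound (hg : IsDyadicStep d g) (a b : ℝ) : ∃ C, ∀ x ∈ Set.Icc a b, |g x| ≤ C := by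
  refine ⟨∑ k ∈ Finset.Icc ⌊(2 : ℝ) ^ d * a⌋ ⌊(2 : ℝ) ^ d * b⌋, |g (k / 2 ^ d)|, fun x hx => ?_⟩
  rw [hg.apply_eq x]
  refine Finset.single_le_sum (f := fun k : ℤ => |g (k / 2 ^ d)|) (fun _ _ => abs_nonneg _) ?_
  exact Finset.mem_Icc.2
    ⟨Int.floor_mono (by gcongr; exact hx.1), Int.floor_mono (by gcongr; exact hx.2)⟩

lemma integrableOn_Icc (hg : IsDyadicStep d g) (a b : ℝ) : IntegrableOn g (Set.Icc a b) := by
  obtain ⟨C, hC⟩ := hg.exists_bound a b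
  exact IntegrableOn.of_bound (by simp) hg.measurable.aestronglyMeasurable C
    (ae_restrict_of_forall_mem measurableSet_Icc fun x hx =>
      (Real.norm_eq_abs _).trans_le (hC x hx))

lemma integrable (hg : IsDyadicStep d g) : Integrable g lebI :=
  hg.integrableOn_Icc 0 1

lemma setIntegral_Ico_zero (hg : IsDyadicStep d g) (M : ℕ) :
    ∫ t in Set.Ico 0 ((M : ℝ) / 2 ^ d), g t = (∑ k ∈ Finset.range M, g (k / 2 ^ d)) / 2 ^ d := by
  induction M with
  | zero => simp
  | succ M ih =>
    have hM : (0 : ℝ) ≤ M / 2 ^ d := by positivity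
    have hMM : (M : ℝ) / 2 ^ d ≤ (M + 1 : ℕ) / 2 ^ d := by gcongr; simp
    have hconst : ∀ t ∈ Set.Ico ((M : ℝ) / 2 ^ d) ((M + 1 : ℕ) / 2 ^ d), g t = g (M / 2 ^ d) := by
      intro t ⟨ht₁, ht₂⟩
      refine hg _ _ ?_
      have h2 : (0 : ℝ) < 2 ^ d := by positivity
      rw [div_le_iff₀ h2] at ht₁
      rw [lt_div_iff₀ h2] at ht₂
      push_cast at ht₂
      rw [floor_two_pow_mul_natCast_div, Int.floor_eq_iff]
      push_cast
      constructor <;> linarith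
    rw [← Set.Ico_union_Ico_eq_Ico hM hMM, setIntegral_union Set.Ico_disjoint_Ico_same
      measurableSet_Ico ((hg.integrableOn_Icc _ _).mono_set Set.Ico_subset_Icc_self)
      ((hg.integrableOn_Icc _ _).mono_set Set.Ico_subset_Icc_self), ih,
      setIntegral_congr_fun measurableSet_Ico hconst, setIntegral_const,
      Real.volume_real_Ico_of_le hMM, Finset.sum_range_succ]
    push_cast
    ring

lemma integral_eq_sum (hg : IsDyadicStep d g) :
    ∫ t, g t ∂lebI = (∑ k ∈ Finset.range (2 ^ d), g (k / 2 ^ d)) / 2 ^ d := by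
  have hlebI : lebI = volume.restrict (Set.Ico 0 (((2 ^ d : ℕ) : ℝ) / 2 ^ d)) := by
    rw [lebI, Nat.cast_pow, Nat.cast_ofNat, div_self (by positivity)]
    exact (Measure.restrict_congr_set Ico_ae_eq_Icc).symm
  rw [hlebI, hg.setIntegral_Ico_zero]

lemma exists_ae_bound (hg : IsDyadicStep d g) : ∃ C, ∀ᵐ x ∂lebI, |g x| ≤ C :=
  let ⟨C, hC⟩ := hg.exists_bound 0 1
  ⟨C, ae_restrict_of_forall_mem measurableSet_Icc hC⟩

lemma memLp (hg : IsDyadicStep d g) (p : ℝ≥0∞) : MemLp g p lebI :=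
  let ⟨C, hC⟩ := hg.exists_ae_bound
  MemLp.of_bound hg.measurable.aestronglyMeasurable C (by simpa only [Real.norm_eq_abs] using hC)

end IsDyadicStep

lemma rademacher_eq_one_or_neg_one (k : ℕ) (t : ℝ) : rademacher k t = 1 ∨ rademacher k t = -1 :=
  (Int.even_or_odd _).imp Even.neg_one_zpow Odd.neg_one_zpow

lemma rademacher_sq (k : ℕ) (t : ℝ) : rademacher k t ^ 2 = 1 := by
  rcases rademacher_eq_one_or_neg_one k t with h | h <;> simp [h]

lemma isDyadicStep_rademacher {d k : ℕ} (hk : k ≤ d + 1) : IsDyadicStep d (rademacher k) := by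
  obtain ⟨e, he⟩ := Nat.exists_eq_add_of_le (Nat.sub_le_of_le_add hk)
  intro x y h
  simp only [rademacher]
  rw [floor_two_pow_mul_eq_div x (k - 1) e, floor_two_pow_mul_eq_div y (k - 1) e, ← he, h]

lemma rademacher_natCast_div (d k : ℕ) : rademacher (d + 1) (k / 2 ^ d) = (-1) ^ k := by
  rw [rademacher, Nat.add_sub_cancel, floor_two_pow_mul_natCast_div, zpow_natCast]

@[fun_prop]
lemma measurable_rademacher (k : ℕ) : Measurable (rademacher k) :=
  (isDyadicStep_rademacher k.le_succ).measurable

namespace IsDyadicStep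

variable {d : ℕ} {g F G : ℝ → ℝ}

lemma mul_rademacher (hg : IsDyadicStep d g) :
    IsDyadicStep (d + 1) fun t => g t * rademacher (d + 2) t :=
  (hg.mono d.le_succ).mul (isDyadicStep_rademacher le_rfl)

lemma integral_mul_rademacher (hg : IsDyadicStep d g) :
    ∫ t, g t * rademacher (d + 2) t ∂lebI = 0 := by
  have hpair : ∀ j : ℕ, g ((2 * j : ℕ) / 2 ^ (d + 1)) = g ((2 * j + 1 : ℕ) / 2 ^ (d + 1)) :=
    fun j => hg _ _ (by
      rw [floor_two_pow_mul_eq_div _ d 1, floor_two_pow_mul_eq_div _ d 1,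
        floor_two_pow_mul_natCast_div, floor_two_pow_mul_natCast_div]
      push_cast
      omega)
  rw [hg.mul_rademacher.integral_eq_sum, pow_succ', Finset.sum_range_two_mul,
    Finset.sum_eq_zero fun j _ => ?_, zero_div]
  rw [rademacher_natCast_div (d + 1), rademacher_natCast_div (d + 1), hpair,
    pow_succ (-1 : ℝ) (2 * j), (even_two_mul j).neg_one_pow]
  ring

theorem integral_comp_add_rademacher_mul (φ : ℝ → ℝ) (hF : IsDyadicStep d F)
    (hG : IsDyadicStep d G) :
    ∫ t, φ (F t + rademacher (d + 2) t * G t) ∂lebI =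
      ∫ t, (φ (F t + G t) + φ (F t - G t)) / 2 ∂lebI := by
  have hsplit : ∀ t, φ (F t + rademacher (d + 2) t * G t) =
      (φ (F t + G t) + φ (F t - G t)) / 2 +
        (φ (F t + G t) - φ (F t - G t)) / 2 * rademacher (d + 2) t := by
    intro t
    rcases rademacher_eq_one_or_neg_one (d + 2) t with h | h <;>
      simp only [h, one_mul, neg_one_mul, ← sub_eq_add_neg] <;> ring
  have hodd : IsDyadicStep d fun t => (φ (F t + G t) - φ (F t - G t)) / 2 :=
    hF.comp₂ (fun x y => (φ (x + y) - φ (x - y)) / 2) hG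
  simp_rw [hsplit]
  rw [integral_add ((hF.comp₂ (fun x y => (φ (x + y) + φ (x - y)) / 2) hG).integrable)
    hodd.mul_rademacher.integrable, hodd.integral_mul_rademacher, add_zero]

theorem integral_add_rademacher_mul_sq (hF : IsDyadicStep d F) (hG : IsDyadicStep d G) :
    ∫ t, (F t + rademacher (d + 2) t * G t) ^ 2 ∂lebI =
      ∫ t, F t ^ 2 ∂lebI + ∫ t, G t ^ 2 ∂lebI := by
  rw [integral_comp_add_rademacher_mul (· ^ 2) hF hG, ← integral_add (hF.comp (· ^ 2)).integrable
    (hG.comp (· ^ 2)).integrable]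
  congr 1 with t
  ring

theorem integral_add_rademacher_mul_const_pow (hF : IsDyadicStep d F) (b : ℝ) (l : ℕ) :
    ∫ t, (F t + rademacher (d + 2) t * b) ^ (2 * l) ∂lebI =
      ∑ i ∈ Finset.range (l + 1),
        ((2 * l).choose (2 * i) : ℝ) * b ^ (2 * (l - i)) * ∫ t, F t ^ (2 * i) ∂lebI := by
  rw [integral_comp_add_rademacher_mul (· ^ (2 * l)) hF (const d b)]
  simp only [add_pow_add_sub_pow_div_two]
  rw [integral_finsetSum _ fun i _ => (hF.comp fun x =>
    ((2 * l).choose (2 * i) : ℝ) * x ^ (2 * i) * b ^ (2 * (l - i))).integrable]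
  refine Finset.sum_congr rfl fun i _ => ?_
  rw [integral_mul_const, integral_const_mul]
  ring

theorem sqrt_integral_add_rademacher_mul_pow_four_le (hF : IsDyadicStep d F)
    (hG : IsDyadicStep d G) :
    √(∫ t, (F t + rademacher (d + 2) t * G t) ^ 4 ∂lebI) ≤
      √(∫ t, F t ^ 4 ∂lebI) + 3 * √(∫ t, G t ^ 4 ∂lebI) := by
  set x := √(∫ t, F t ^ 4 ∂lebI)
  set y := √(∫ t, G t ^ 4 ∂lebI)
  have hF4 : ∫ t, F t ^ 4 ∂lebI = x ^ 2 :=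
    (Real.sq_sqrt (integral_nonneg fun t => by positivity)).symm
  have hG4 : ∫ t, G t ^ 4 ∂lebI = y ^ 2 :=
    (Real.sq_sqrt (integral_nonneg fun t => by positivity)).symm
  have hcross : ∫ t, F t ^ 2 * G t ^ 2 ∂lebI ≤ x * y := by
    have := integral_mul_le_sqrt_mul_sqrt (ae_of_all _ fun t => sq_nonneg (F t))
      (ae_of_all _ fun t => sq_nonneg (G t)) ((hF.comp (· ^ 2)).memLp 2) ((hG.comp (· ^ 2)).memLp 2)
    simpa only [← pow_mul] using this
  have hexpand : ∫ t, (F t + rademacher (d + 2) t * G t) ^ 4 ∂lebI =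
      x ^ 2 + 6 * ∫ t, F t ^ 2 * G t ^ 2 ∂lebI + y ^ 2 := by
    have hFG := (hF.comp (· ^ 2)).mul (hG.comp (· ^ 2))
    calc ∫ t, (F t + rademacher (d + 2) t * G t) ^ 4 ∂lebI
        = ∫ t, (F t ^ 4 + 6 * (F t ^ 2 * G t ^ 2)) + G t ^ 4 ∂lebI := by
          rw [integral_comp_add_rademacher_mul (· ^ 4) hF hG]
          congr 1 with t
          ring
      _ = x ^ 2 + 6 * ∫ t, F t ^ 2 * G t ^ 2 ∂lebI + y ^ 2 := by
          rw [integral_add ((hF.comp (· ^ 4)).add (hFG.comp (6 * ·))).integrable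
            (hG.comp (· ^ 4)).integrable, integral_add (hF.comp (· ^ 4)).integrable
            (hFG.comp (6 * ·)).integrable, integral_const_mul, hF4, hG4]
  have hx : 0 ≤ x := Real.sqrt_nonneg _
  have hy : 0 ≤ y := Real.sqrt_nonneg _
  rw [Real.sqrt_le_left (by positivity), hexpand]
  nlinarith

end IsDyadicStep

section RademacherSum

variable {ι : Type*} {s : Finset ι} {idx : ι → ℕ}

lemma isDyadicStep_sum_rademacher {d : ℕ} (β : ι → ℝ) (h : ∀ q ∈ s, idx q ≤ d + 1) :
    IsDyadicStep d fun t => ∑ q ∈ s, β q * rademacher (idx q) t :=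
  IsDyadicStep.sum fun q hq => (IsDyadicStep.const d (β q)).mul (isDyadicStep_rademacher (h q hq))

-- `rademacher 1 = 1` on `[0, 1)`: only a top index `≥ 2`, which `s.Nonempty` guarantees,
-- is a fair sign given the lower ones.
lemma exists_isDyadicStep_sum_rademacher [DecidableEq ι] {a : ι} (β : ι → ℝ) (ha : a ∉ s)
    (hmax : ∀ q ∈ s, idx q ≤ idx a) (hinj : Set.InjOn idx ↑(insert a s))
    (hpos : ∀ q ∈ s, 1 ≤ idx q) (hs : s.Nonempty) :
    ∃ d, idx a = d + 2 ∧ IsDyadicStep d fun t => ∑ q ∈ s, β q * rademacher (idx q) t := by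
  have hlt : ∀ q ∈ s, idx q < idx a := fun q hq => (hmax q hq).lt_of_ne fun h =>
    ha (hinj (by simp [hq]) (by simp) h ▸ hq)
  obtain ⟨q, hq⟩ := hs
  exact ⟨idx a - 2, by grind, isDyadicStep_sum_rademacher β fun q' hq' => by grind⟩

theorem integral_sum_rademacher_sq (β : ι → ℝ) (hinj : Set.InjOn idx s)
    (hpos : ∀ q ∈ s, 1 ≤ idx q) :
    ∫ t, (∑ q ∈ s, β q * rademacher (idx q) t) ^ 2 ∂lebI = ∑ q ∈ s, β q ^ 2 := by
  classical
  induction s using Finset.induction_on_max_value idx with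
  | empty => simp
  | insert a s ha hmax ih =>
    rw [Finset.sum_insert ha, ← ih (hinj.mono (by simp)) fun q hq => hpos q (by simp [hq])]
    rcases s.eq_empty_or_nonempty with rfl | hs
    · simp [mul_pow, rademacher_sq]
    obtain ⟨d, hd, hg⟩ := exists_isDyadicStep_sum_rademacher β ha hmax hinj
      (fun q hq => hpos q (by simp [hq])) hs
    calc ∫ t, (∑ q ∈ insert a s, β q * rademacher (idx q) t) ^ 2 ∂lebI
        = ∫ t, ((∑ q ∈ s, β q * rademacher (idx q) t) + rademacher (d + 2) t * β a) ^ 2 ∂lebI := by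
          congr 1 with t
          rw [Finset.sum_insert ha, hd]
          ring
      _ = _ := by
          rw [hg.integral_add_rademacher_mul_sq (IsDyadicStep.const d (β a)), integral_const,
            probReal_univ, one_smul, add_comm]

theorem integral_sum_rademacher_pow_le (β : ι → ℝ) (hinj : Set.InjOn idx s)
    (hpos : ∀ q ∈ s, 1 ≤ idx q) (l : ℕ) :
    ∫ t, (∑ q ∈ s, β q * rademacher (idx q) t) ^ (2 * l) ∂lebI ≤
      4 ^ (l * l) * (∑ q ∈ s, β q ^ 2) ^ l := by
  classical
  induction s using Finset.induction_on_max_value idx generalizing l with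
  | empty => rcases l with _ | l <;> simp
  | insert a s ha hmax ih =>
    have ih' := ih (hinj.mono (by simp)) fun q hq => hpos q (by simp [hq])
    set σ := ∑ q ∈ s, β q ^ 2
    set b := β a
    have hσ : 0 ≤ σ := Finset.sum_nonneg fun q _ => sq_nonneg (β q)
    rw [Finset.sum_insert ha, add_comm (b ^ 2)]
    rcases s.eq_empty_or_nonempty with rfl | hs
    · simp only [Finset.sum_insert ha, Finset.sum_empty, add_zero, zero_add, mul_pow, pow_mul,
        rademacher_sq, mul_one, integral_const, probReal_univ, one_smul]
      exact le_mul_of_one_le_left (by positivity) (one_le_pow₀ (one_le_pow₀ (by norm_num)))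
    obtain ⟨d, hd, hg⟩ := exists_isDyadicStep_sum_rademacher β ha hmax hinj
      (fun q hq => hpos q (by simp [hq])) hs
    set g := fun t => ∑ q ∈ s, β q * rademacher (idx q) t
    calc ∫ t, (∑ q ∈ insert a s, β q * rademacher (idx q) t) ^ (2 * l) ∂lebI
        = ∫ t, (g t + rademacher (d + 2) t * b) ^ (2 * l) ∂lebI := by
          congr 1 with t
          rw [Finset.sum_insert ha, hd]
          ring
      _ = ∑ i ∈ Finset.range (l + 1),
            ((2 * l).choose (2 * i) : ℝ) * b ^ (2 * (l - i)) * ∫ t, g t ^ (2 * i) ∂lebI :=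
          hg.integral_add_rademacher_mul_const_pow b l
      _ ≤ ∑ i ∈ Finset.range (l + 1),
            ((2 * l).choose (2 * i) : ℝ) * b ^ (2 * (l - i)) * (4 ^ (i * i) * σ ^ i) := by
          refine Finset.sum_le_sum fun i _ => mul_le_mul_of_nonneg_left (ih' i) ?_
          rw [pow_mul]
          positivity
      _ ≤ ∑ i ∈ Finset.range (l + 1), 4 ^ (l * l) * (σ ^ i * (b ^ 2) ^ (l - i) * l.choose i) := by
          refine Finset.sum_le_sum fun i hi => ?_
          have hc : ((2 * l).choose (2 * i) : ℝ) * 4 ^ (i * i) ≤ l.choose i * 4 ^ (l * l) := by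
            exact_mod_cast choose_mul_four_pow_le (Finset.mem_range_succ_iff.1 hi)
          have hw : 0 ≤ (b ^ 2) ^ (l - i) * σ ^ i := by positivity
          rw [pow_mul]
          linarith [mul_le_mul_of_nonneg_right hc hw]
      _ = 4 ^ (l * l) * (σ + b ^ 2) ^ l := by rw [← Finset.mul_sum, add_pow]

end RademacherSum

section Chaos

variable (a : ℕ → ℕ → ℝ)

noncomputable def rowSum (j : ℕ) (t : ℝ) : ℝ :=
  ∑ i ∈ Finset.Ico 1 j, a i j * rademacher i t

noncomputable def chaosSum (N : ℕ) (t : ℝ) : ℝ :=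
  ∑ j ∈ Finset.Icc 1 N, rademacher j t * rowSum a j t

noncomputable def chaosNormSq (N : ℕ) : ℝ :=
  ∑ j ∈ Finset.Icc 1 N, ∑ i ∈ Finset.Ico 1 j, a i j ^ 2

lemma isDyadicStep_rowSum (j : ℕ) : IsDyadicStep (j - 2) (rowSum a j) :=
  isDyadicStep_sum_rademacher (idx := id) (a · j) fun i hi => by
    simp only [Finset.mem_Ico] at hi
    simp only [id]
    omega

lemma isDyadicStep_chaosSum (N : ℕ) : IsDyadicStep (N - 1) (chaosSum a N) :=
  IsDyadicStep.sum fun j hj => by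
    simp only [Finset.mem_Icc] at hj
    exact (isDyadicStep_rademacher (by omega)).mul ((isDyadicStep_rowSum a j).mono (by omega))

lemma chaosSum_add_two (d : ℕ) (t : ℝ) :
    chaosSum a (d + 2) t = chaosSum a (d + 1) t + rademacher (d + 2) t * rowSum a (d + 2) t :=
  Finset.sum_Icc_succ_top (by omega) _

lemma chaosNormSq_add_two (d : ℕ) :
    chaosNormSq a (d + 2) = chaosNormSq a (d + 1) + ∑ i ∈ Finset.Ico 1 (d + 2), a i (d + 2) ^ 2 :=
  Finset.sum_Icc_succ_top (by omega) _

lemma integral_rowSum_sq (j : ℕ) :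
    ∫ t, rowSum a j t ^ 2 ∂lebI = ∑ i ∈ Finset.Ico 1 j, a i j ^ 2 :=
  integral_sum_rademacher_sq (idx := id) (a · j) (Set.injOn_id _)
    fun _ hi => (Finset.mem_Ico.1 hi).1

lemma sqrt_integral_rowSum_pow_four_le (j : ℕ) :
    √(∫ t, rowSum a j t ^ 4 ∂lebI) ≤ 16 * ∑ i ∈ Finset.Ico 1 j, a i j ^ 2 := by
  have hσ : 0 ≤ ∑ i ∈ Finset.Ico 1 j, a i j ^ 2 := Finset.sum_nonneg fun i _ => sq_nonneg _
  rw [Real.sqrt_le_left (by positivity)]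
  calc ∫ t, rowSum a j t ^ 4 ∂lebI ≤ 4 ^ (2 * 2) * (∑ i ∈ Finset.Ico 1 j, a i j ^ 2) ^ 2 :=
        integral_sum_rademacher_pow_le (idx := id) (a · j) (Set.injOn_id _)
          (fun i hi => (Finset.mem_Ico.1 hi).1) 2
    _ = _ := by ring

theorem integral_chaosSum_sq : ∀ N, ∫ t, chaosSum a N t ^ 2 ∂lebI = chaosNormSq a N
  | 0 => by simp [chaosSum, chaosNormSq]
  | 1 => by simp [chaosSum, chaosNormSq, rowSum]
  | N + 2 => by
    simp only [chaosSum_add_two, chaosNormSq_add_two]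
    rw [IsDyadicStep.integral_add_rademacher_mul_sq (d := N) (isDyadicStep_chaosSum a (N + 1))
      (isDyadicStep_rowSum a (N + 2)), integral_chaosSum_sq (N + 1), integral_rowSum_sq]

theorem sqrt_integral_chaosSum_pow_four_le :
    ∀ N, √(∫ t, chaosSum a N t ^ 4 ∂lebI) ≤ 48 * chaosNormSq a N
  | 0 => by simp [chaosSum, chaosNormSq]
  | 1 => by simp [chaosSum, chaosNormSq, rowSum]
  | N + 2 => by
    simp only [chaosSum_add_two, chaosNormSq_add_two]
    grw [IsDyadicStep.sqrt_integral_add_rademacher_mul_pow_four_le (d := N)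
      (isDyadicStep_chaosSum a (N + 1)) (isDyadicStep_rowSum a (N + 2)),
      sqrt_integral_chaosSum_pow_four_le (N + 1), sqrt_integral_rowSum_pow_four_le]
    linarith

end Chaos

lemma Finset.sum_Icc_Ioc_comm {M : Type*} [AddCommMonoid M] (n : ℕ) (f : ℕ → ℕ → M) :
    ∑ i ∈ Finset.Icc 1 n, ∑ j ∈ Finset.Ioc i n, f i j =
      ∑ j ∈ Finset.Icc 1 n, ∑ i ∈ Finset.Ico 1 j, f i j :=
  Finset.sum_comm' fun i j => by simp only [Finset.mem_Icc, Finset.mem_Ioc, Finset.mem_Ico]; omega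

lemma sum_Icc_Ioc_eq_chaosSum (a : ℕ → ℕ → ℝ) (n : ℕ) (t : ℝ) :
    ∑ i ∈ Finset.Icc 1 n, ∑ j ∈ Finset.Ioc i n, a i j * (rademacher i t * rademacher j t) =
      chaosSum a n t := by
  rw [Finset.sum_Icc_Ioc_comm]
  refine Finset.sum_congr rfl fun j _ => ?_
  rw [rowSum, Finset.mul_sum]
  exact Finset.sum_congr rfl fun i _ => by ring

lemma pairIndex_lt_pairIndex {i j k l : ℕ} (hij : i < j) (hjl : j < l) (hk : 1 ≤ k) :
    (j - 1) * (j - 2) / 2 + i < (l - 1) * (l - 2) / 2 + k := by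
  have hT : ∀ j, (j - 1) * (j - 2) / 2 = (j - 1).choose 2 := fun j => by
    rw [Nat.choose_two_right, Nat.sub_sub]
  obtain ⟨j, rfl⟩ : ∃ j', j = j' + 1 := ⟨j - 1, by omega⟩
  have hstep : (j + 1).choose 2 = j + j.choose 2 := by simp [Nat.choose_succ_succ]
  have hmono : (j + 1).choose 2 ≤ (l - 1).choose 2 := Nat.choose_le_choose 2 (by omega)
  rw [hT, hT, Nat.add_sub_cancel]
  omega

lemma pairIndex_injOn (n : ℕ) :
    Set.InjOn (fun q : (_ : ℕ) × ℕ => (q.2 - 1) * (q.2 - 2) / 2 + q.1)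
      ((Finset.Icc 1 n).sigma fun i => Finset.Ioc i n) := by
  rintro ⟨i, j⟩ hq ⟨k, l⟩ hq' h
  simp only [Finset.coe_sigma, Set.mem_sigma_iff, Finset.coe_Icc, Finset.coe_Ioc, Set.mem_Icc,
    Set.mem_Ioc] at hq hq' h
  obtain rfl : j = l := by
    rcases lt_trichotomy j l with hjl | rfl | hjl
    · exact absurd h (pairIndex_lt_pairIndex (by omega) hjl (by omega)).ne
    · rfl
    · exact absurd h (pairIndex_lt_pairIndex (by omega) hjl (by omega)).ne'
  obtain rfl : i = k := by omega
  rfl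

lemma lintegral_enorm_sum_rho_pow_le (m n : ℕ) (a : ℕ → ℕ → ℝ) (t : ℝ) :
    ∫⁻ u, ‖∑ i ∈ Finset.Icc 1 n, ∑ j ∈ Finset.Ioc i n,
        rho i j u * a i j * (rademacher i t * rademacher j t)‖ₑ ^ ((2 * m : ℕ) : ℝ) ∂lebI ≤
      ENNReal.ofReal (4 ^ (m * m) * chaosNormSq a n ^ m) := by
  set P := (Finset.Icc 1 n).sigma fun i => Finset.Ioc i n
  set idx := fun q : (_ : ℕ) × ℕ => (q.2 - 1) * (q.2 - 2) / 2 + q.1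
  set β := fun q : (_ : ℕ) × ℕ => a q.1 q.2 * (rademacher q.1 t * rademacher q.2 t)
  have hsum : ∀ u, ∑ i ∈ Finset.Icc 1 n, ∑ j ∈ Finset.Ioc i n,
      rho i j u * a i j * (rademacher i t * rademacher j t) =
        ∑ q ∈ P, β q * rademacher (idx q) u := fun u => by
    rw [Finset.sum_sigma]
    exact Finset.sum_congr rfl fun i _ => Finset.sum_congr rfl fun j _ => by rw [rho]; ring
  have hβ : ∑ q ∈ P, β q ^ 2 = chaosNormSq a n := by
    rw [Finset.sum_sigma]
    simp only [β, mul_pow, rademacher_sq, mul_one]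
    exact Finset.sum_Icc_Ioc_comm n _
  have hstep : IsDyadicStep (P.sup idx) fun u => (∑ q ∈ P, β q * rademacher (idx q) u) ^ (2 * m) :=
    (isDyadicStep_sum_rademacher β fun q hq => (Finset.le_sup hq).trans (Nat.le_succ _)).comp _
  simp_rw [hsum, ENNReal.rpow_natCast, Real.enorm_eq_ofReal_abs,
    ← ENNReal.ofReal_pow (abs_nonneg _), (even_two_mul m).pow_abs]
  rw [← ofReal_integral_eq_lintegral_ofReal hstep.integrable
    (ae_of_all _ fun u => (even_two_mul m).pow_nonneg _), ← hβ]
  exact ENNReal.ofReal_le_ofReal (integral_sum_rademacher_pow_le β (pairIndex_injOn n)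
    (fun q hq => by simp only [Finset.mem_sigma, Finset.mem_Icc] at hq; omega) m)

theorem lintegral_eLpNorm_sum_rho_le {p : ℝ≥0∞} {m : ℕ} (hm : 1 ≤ m) (hpm : p ≤ 2 * m) (n : ℕ)
    (a : ℕ → ℕ → ℝ) :
    ∫⁻ u, eLpNorm (fun t => ∑ i ∈ Finset.Icc 1 n, ∑ j ∈ Finset.Ioc i n,
        rho i j u * a i j * (rademacher i t * rademacher j t)) p lebI ∂lebI ≤
      ENNReal.ofReal (2 ^ m * √(chaosNormSq a n)) := by
  have hS : 0 ≤ chaosNormSq a n :=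
    Finset.sum_nonneg fun j _ => Finset.sum_nonneg fun i _ => sq_nonneg _
  have h4 : (4 : ℝ) ^ (m * m) = (2 ^ m) ^ (2 * m) := by
    rw [← pow_mul, show (4 : ℝ) = 2 ^ 2 by norm_num, ← pow_mul]
    ring_nf
  have hB : (4 : ℝ) ^ (m * m) * chaosNormSq a n ^ m = (2 ^ m * √(chaosNormSq a n)) ^ (2 * m) := by
    rw [mul_pow, h4, pow_mul √_ 2 m, Real.sq_sqrt hS]
  refine (lintegral_eLpNorm_le_rpow (by unfold rho; fun_prop) (by norm_cast; omega)
    (by simpa using hpm) (lintegral_enorm_sum_rho_pow_le m n a)).trans_eq ?_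
  rw [ENNReal.ofReal_rpow_of_nonneg (by positivity) (by positivity), hB, one_div,
    Real.pow_rpow_inv_natCast (by positivity) (by omega)]

theorem ofReal_sqrt_chaosNormSq_le_eLpNorm {p : ℝ≥0∞} (hp : 1 ≤ p) (n : ℕ) (a : ℕ → ℕ → ℝ) :
    ENNReal.ofReal √(chaosNormSq a n) ≤
      48 * eLpNorm (fun t => ∑ i ∈ Finset.Icc 1 n, ∑ j ∈ Finset.Ioc i n,
        a i j * (rademacher i t * rademacher j t)) p lebI := by
  have hF := isDyadicStep_chaosSum a n
  obtain ⟨C, hC⟩ := hF.exists_ae_bound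
  have hL1 := sqrt_integral_sq_le_mul_integral_abs hF.measurable.aestronglyMeasurable
    hC (by norm_num : (0 : ℝ) ≤ 48)
    ((sqrt_integral_chaosSum_pow_four_le a n).trans_eq (by rw [integral_chaosSum_sq]))
  rw [integral_chaosSum_sq] at hL1
  simp_rw [sum_Icc_Ioc_eq_chaosSum]
  calc ENNReal.ofReal √(chaosNormSq a n) ≤ ENNReal.ofReal (48 * ∫ t, |chaosSum a n t| ∂lebI) :=
        ENNReal.ofReal_le_ofReal hL1
    _ = 48 * eLpNorm (chaosSum a n) 1 lebI := by
        rw [ENNReal.ofReal_mul (by norm_num), eLpNorm_one_eq_lintegral_enorm,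
          ← ofReal_integral_norm_eq_lintegral_enorm hF.integrable]
        simp
    _ ≤ 48 * eLpNorm (chaosSum a n) p lebI := by
        gcongr
        exact eLpNorm_le_eLpNorm_of_exponent_le hp hF.measurable.aestronglyMeasurable

/-- The Rademacher chaos of order 2 is a RUC system in `L^p[0,1]` for every
`p ∈ [1,∞)`: the average over independent random signs of the `L^p`-norm of the
sign-randomized chaos sum is dominated by a constant multiple of the `L^p`-norm
of the original sum. -/
theorem chaos_RUC_system (p : ℝ≥0∞) (hp : 1 ≤ p) (hp' : p ≠ ∞) :
    ∃ C : ℝ, 0 < C ∧ ∀ n : ℕ, 2 ≤ n → ∀ a : ℕ → ℕ → ℝ,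
      (∫⁻ u, eLpNorm (fun t => ∑ i ∈ Finset.Icc 1 n, ∑ j ∈ Finset.Ioc i n,
          rho i j u * a i j * (rademacher i t * rademacher j t)) p lebI ∂lebI) ≤
        ENNReal.ofReal C *
          eLpNorm (fun t => ∑ i ∈ Finset.Icc 1 n, ∑ j ∈ Finset.Ioc i n,
            a i j * (rademacher i t * rademacher j t)) p lebI := by
  obtain ⟨m, hpm⟩ := ENNReal.exists_nat_gt hp'
  have hm : 1 ≤ m := by exact_mod_cast hp.trans hpm.le
  refine ⟨2 ^ m * 48, by positivity, fun n _ a => ?_⟩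
  calc _ ≤ ENNReal.ofReal (2 ^ m * √(chaosNormSq a n)) :=
        lintegral_eLpNorm_sum_rho_le hm (hpm.le.trans (by norm_cast; omega)) n a
    _ ≤ ENNReal.ofReal (2 ^ m) * (48 * _) := by
        rw [ENNReal.ofReal_mul (by positivity)]
        gcongr
        exact ofReal_sqrt_chaosNormSq_le_eLpNorm hp n a
    _ = _ := by rw [ENNReal.ofReal_mul (by positivity), ENNReal.ofReal_ofNat, mul_assoc]
end

section
/- Let A be an N-function. Then there is a constant C > 0, independent of x, such that for every measurable function x : [0,1]² → ℝ with ‖x‖_{L_A([0,1]²)} < ∞, ∫₀¹ ‖x(·, t)‖_{L_A[0,1]} dt ≤ C · ‖x‖_{L_A([0,1]²)}, where ‖x(·,t)‖_{L_A[0,1]} is the Luxemburg gauge of the section s ↦ x(s,t) on [0,1] and the left-hand side is the integral over t ∈ [0,1]. (Embedding L_A(I×I) ⊂ L_1[L_A] of the Orlicz space on the square into the mixed-norm space.) -/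
open MeasureTheory ENNReal

/-- `A` is an N-function: a continuous convex function `[0,∞) → [0,∞)` with
`A(u)/u → 0` as `u → 0⁺` and `u/A(u) → 0` as `u → ∞`. -/
structure IsNFunction (A : ℝ → ℝ) : Prop where
  continuousOn : ContinuousOn A (Set.Ici 0)
  convexOn : ConvexOn ℝ (Set.Ici 0) A
  nonneg : ∀ u : ℝ, 0 ≤ u → 0 ≤ A u
  tendsto_zero : Filter.Tendsto (fun u => A u / u) (nhdsWithin 0 (Set.Ioi 0)) (nhds 0)
  tendsto_top : Filter.Tendsto (fun u => u / A u) Filter.atTop (nhds 0)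

/-- The Luxemburg gauge `‖x‖_{L_A(ν)} = inf{ λ > 0 : ∫ A(|x|/λ) dν ≤ 1 }`,
interpreted as `+∞` (the infimum of the empty set in `ℝ≥0∞`) if no such `λ` exists. -/
noncomputable def luxemburg (A : ℝ → ℝ) {α : Type*} [MeasurableSpace α]
    (ν : Measure α) (x : α → ℝ) : ℝ≥0∞ :=
  sInf (ENNReal.ofReal ''
    {l : ℝ | 0 < l ∧ ∫⁻ s, ENNReal.ofReal (A (|x s| / l)) ∂ν ≤ 1})

/-- Lebesgue measure on the square `[0,1]²`. -/
noncomputable def lebSq : Measure (ℝ × ℝ) :=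
  volume.restrict (Set.Icc (0 : ℝ) 1 ×ˢ Set.Icc (0 : ℝ) 1)

lemma nf_zero {A : ℝ → ℝ} (hA : IsNFunction A) : A 0 = 0 := by
  have h1 : Filter.Tendsto A (nhdsWithin 0 (Set.Ioi 0)) (nhds (A 0)) :=
    ((hA.continuousOn 0 (Set.mem_Ici.2 le_rfl)).tendsto).mono_left
      (nhdsWithin_mono 0 (Set.Ioi_subset_Ici_self))
  have hid : Filter.Tendsto (fun u : ℝ => u) (nhdsWithin 0 (Set.Ioi 0)) (nhds 0) :=
    Filter.tendsto_id.mono_left nhdsWithin_le_nhds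
  have h2 : Filter.Tendsto (fun u => A u / u * u) (nhdsWithin 0 (Set.Ioi 0)) (nhds 0) := by
    simpa using hA.tendsto_zero.mul hid
  have h3 : Filter.Tendsto A (nhdsWithin 0 (Set.Ioi 0)) (nhds 0) := by
    refine h2.congr' ?_
    filter_upwards [self_mem_nhdsWithin] with u hu
    exact div_mul_cancel₀ _ (ne_of_gt hu)
  exact tendsto_nhds_unique h1 h3

lemma nf_scale {A : ℝ → ℝ} (hA : IsNFunction A) {c u : ℝ} (hc0 : 0 ≤ c) (hc1 : c ≤ 1)
    (hu : 0 ≤ u) : A (c * u) ≤ c * A u := by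
  have := hA.convexOn.2 (Set.mem_Ici.2 hu) (Set.mem_Ici.2 (le_refl (0:ℝ)))
    hc0 (by linarith : (0:ℝ) ≤ 1 - c) (by ring)
  simp only [smul_eq_mul, mul_zero, add_zero] at this
  calc A (c * u) ≤ c * A u + (1 - c) * A 0 := this
    _ = c * A u := by rw [nf_zero hA]; ring

lemma nf_mono {A : ℝ → ℝ} (hA : IsNFunction A) {u v : ℝ} (hu : 0 ≤ u) (huv : u ≤ v) :
    A u ≤ A v := by
  rcases eq_or_lt_of_le (hu.trans huv) with h | hv
  · have : u = v := le_antisymm huv (by linarith)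
    rw [this]
  · have hc : u = (u / v) * v := by field_simp
    calc A u = A ((u / v) * v) := by rw [← hc]
      _ ≤ (u / v) * A v := nf_scale hA (div_nonneg hu hv.le) (div_le_one_of_le₀ huv hv.le) hv.le
      _ ≤ 1 * A v := by
          apply mul_le_mul_of_nonneg_right _ (hA.nonneg v (hu.trans huv))
          exact div_le_one_of_le₀ huv hv.le
      _ = A v := one_mul _

instance : SFinite lebI := by unfold lebI; infer_instance

lemma lebI_univ : lebI Set.univ = 1 := by
  rw [lebI, Measure.restrict_apply_univ, Real.volume_Icc]
  norm_num

lemma lebSq_prod : lebSq = lebI.prod lebI := by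
  rw [lebSq, lebI, Measure.volume_eq_prod, Measure.prod_restrict]

/-- Key per-section bound. -/
lemma section_bound {A : ℝ → ℝ} (hA : IsNFunction A) {l : ℝ} (hl : 0 < l) (y : ℝ → ℝ) :
    luxemburg A lebI y ≤
      ENNReal.ofReal l * (1 + ∫⁻ s, ENNReal.ofReal (A (|y s| / l)) ∂lebI) := by
  set F := ∫⁻ s, ENNReal.ofReal (A (|y s| / l)) ∂lebI with hF
  rcases eq_or_ne F ∞ with hFt | hFt
  · rw [hFt]
    have : (1:ℝ≥0∞) + ⊤ = ⊤ := by simp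
    rw [this, ENNReal.mul_top (ne_of_gt (ENNReal.ofReal_pos.2 hl))]
    exact le_top
  · set m : ℝ := max 1 F.toReal with hm
    have hm1 : (1:ℝ) ≤ m := le_max_left _ _
    have hm0 : 0 < m := lt_of_lt_of_le one_pos hm1
    have hmem : ENNReal.ofReal (l * m) ∈ ENNReal.ofReal ''
        {l' : ℝ | 0 < l' ∧ ∫⁻ s, ENNReal.ofReal (A (|y s| / l')) ∂lebI ≤ 1} := by
      refine ⟨l * m, ⟨mul_pos hl hm0, ?_⟩, rfl⟩
      have hptwise : ∀ s, ENNReal.ofReal (A (|y s| / (l * m))) ≤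
          ENNReal.ofReal (1 / m) * ENNReal.ofReal (A (|y s| / l)) := by
        intro s
        rw [← ENNReal.ofReal_mul (by positivity)]
        apply ENNReal.ofReal_le_ofReal
        have : |y s| / (l * m) = (1 / m) * (|y s| / l) := by
          rw [div_mul_eq_mul_div, one_mul, div_div]
        rw [this]
        exact nf_scale hA (by positivity) (by rw [div_le_one hm0]; exact hm1)
          (div_nonneg (abs_nonneg _) hl.le)
      calc ∫⁻ s, ENNReal.ofReal (A (|y s| / (l * m))) ∂lebI
          ≤ ∫⁻ s, ENNReal.ofReal (1 / m) * ENNReal.ofReal (A (|y s| / l)) ∂lebI :=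
            lintegral_mono hptwise
        _ = ENNReal.ofReal (1 / m) * F := lintegral_const_mul' _ _ ENNReal.ofReal_ne_top
        _ ≤ ENNReal.ofReal (1 / m) * ENNReal.ofReal m := by
            apply mul_le_mul_right
            calc F = ENNReal.ofReal F.toReal := (ENNReal.ofReal_toReal hFt).symm
              _ ≤ ENNReal.ofReal m := ENNReal.ofReal_le_ofReal (le_max_right _ _)
        _ = 1 := by
            rw [← ENNReal.ofReal_mul (by positivity)]
            rw [one_div, inv_mul_cancel₀ (ne_of_gt hm0)]
            simp
    calc luxemburg A lebI y ≤ ENNReal.ofReal (l * m) := sInf_le hmem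
      _ = ENNReal.ofReal l * ENNReal.ofReal m := ENNReal.ofReal_mul hl.le
      _ ≤ ENNReal.ofReal l * (1 + F) := by
          apply mul_le_mul_right
          rcases le_total 1 F.toReal with h | h
          · rw [hm, max_eq_right h, ENNReal.ofReal_toReal hFt]; exact le_add_self
          · rw [hm, max_eq_left h]; simp only [ENNReal.ofReal_one]; exact (le_self_add : (1:ℝ≥0∞) ≤ 1 + F)

/-- Embedding `L_A(I×I) ⊂ L_1[L_A]`: there is a constant `C > 0`, independent of
`x`, such that for every measurable `x : [0,1]² → ℝ` of finite Luxemburg gauge on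
the square, `∫₀¹ ‖x(·,t)‖_{L_A[0,1]} dt ≤ C‖x‖_{L_A([0,1]²)}`. -/
theorem mixed_L1_le_luxemburg_square (A : ℝ → ℝ) (hA : IsNFunction A) :
    ∃ C : ℝ, 0 < C ∧ ∀ x : ℝ × ℝ → ℝ, Measurable x →
      luxemburg A lebSq x < ∞ →
      (∫⁻ t, luxemburg A lebI (fun s => x (s, t)) ∂lebI) ≤
        ENNReal.ofReal C * luxemburg A lebSq x := by
  refine ⟨2, two_pos, fun x hx hfin => ?_⟩
  set L := ∫⁻ t, luxemburg A lebI (fun s => x (s, t)) ∂lebI with hL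
  have key : ∀ b ∈ ENNReal.ofReal ''
      {l : ℝ | 0 < l ∧ ∫⁻ p, ENNReal.ofReal (A (|x p| / l)) ∂lebSq ≤ 1},
      L ≤ 2 * b := by
    rintro b ⟨l, ⟨hl, hint⟩, rfl⟩
    -- measurability of the integrand on the square
    have hcont : Continuous (fun u : ℝ => A |u|) :=
      hA.continuousOn.comp_continuous continuous_abs (fun u => abs_nonneg u)
    have hg : Measurable (fun p : ℝ × ℝ => ENNReal.ofReal (A (|x p| / l))) := by
      have heq : (fun p : ℝ × ℝ => A (|x p| / l)) =
          (fun u : ℝ => A |u|) ∘ (fun p => |x p| / l) := by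
        funext p
        simp only [Function.comp_apply]
        rw [abs_of_nonneg (div_nonneg (abs_nonneg _) hl.le)]
      exact ENNReal.measurable_ofReal.comp (heq ▸ hcont.measurable.comp (hx.abs.div_const l))
    have htonelli : ∫⁻ t, (∫⁻ s, ENNReal.ofReal (A (|x (s, t)| / l)) ∂lebI) ∂lebI =
        ∫⁻ p, ENNReal.ofReal (A (|x p| / l)) ∂lebSq := by
      rw [lebSq_prod, lintegral_prod_symm _ hg.aemeasurable]
    calc L ≤ ∫⁻ t, ENNReal.ofReal l *
          (1 + ∫⁻ s, ENNReal.ofReal (A (|x (s, t)| / l)) ∂lebI) ∂lebI :=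
        lintegral_mono (fun t => section_bound hA hl _)
      _ = ENNReal.ofReal l * ∫⁻ t,
          (1 + ∫⁻ s, ENNReal.ofReal (A (|x (s, t)| / l)) ∂lebI) ∂lebI :=
        lintegral_const_mul' _ _ ENNReal.ofReal_ne_top
      _ = ENNReal.ofReal l * ((∫⁻ _, 1 ∂lebI) +
          ∫⁻ t, (∫⁻ s, ENNReal.ofReal (A (|x (s, t)| / l)) ∂lebI) ∂lebI) := by
        rw [lintegral_add_left measurable_const]
      _ ≤ ENNReal.ofReal l * (1 + 1) := by
        apply mul_le_mul_right
        apply add_le_add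
        · simp [lebI_univ]
        · rw [htonelli]; exact hint
      _ = 2 * ENNReal.ofReal l := by ring
  have h2 : L / 2 ≤ luxemburg A lebSq x := by
    rw [luxemburg]
    refine le_sInf fun b hb => ?_
    rw [ENNReal.div_le_iff_le_mul (Or.inl (by norm_num)) (Or.inl (by norm_num))]
    rw [mul_comm]
    exact key b hb
  calc L = 2 * (L / 2) := (ENNReal.mul_div_cancel' (by norm_num) (by norm_num)).symm
    _ ≤ 2 * luxemburg A lebSq x := mul_le_mul_right h2 _
    _ = ENNReal.ofReal 2 * luxemburg A lebSq x := by norm_num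
end

section
/- There exists a constant C ≥ 1 such that for every n ≥ 2 and all real numbers a_{i,j} (1 ≤ i < j ≤ n), C^{−1} · (∑_{1≤i<j≤n} a_{i,j}²)^{1/2} ≤ ‖ ∑_{1≤i<j≤n} a_{i,j} r_i r_j ‖_{L_M} ≤ C · (∑_{1≤i<j≤n} a_{i,j}²)^{1/2}. That is, the Rademacher chaos of order 2 is equivalent, in the exponential Orlicz space L_M with M(t) = e^t − 1, to the canonical basis of ℓ². -/
open MeasureTheory ENNReal

/-- The Orlicz (Luxemburg) norm in the exponential Orlicz space `L_M`,
`M(t) = e^t − 1`:  `‖x‖_{L_M} = inf{ λ > 0 : ∫₀¹ (e^{|x(t)|/λ} − 1) dt ≤ 1 }`. -/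
noncomputable def expOrliczNorm (x : ℝ → ℝ) : ℝ :=
  sInf {l : ℝ | 0 < l ∧ ∫ t in Set.Icc (0 : ℝ) 1, (Real.exp (|x t| / l) - 1) ≤ 1}


/-!
On `[0, 1)` the functions `r₁ = 1, r₂, …, rₙ` are read off the first `n - 1` binary digits of `t`,
so the chaos has the law of a Walsh polynomial of degree at most two on the discrete cube
`{0,1}^(n-1)` whose coefficients have square sum `∑ a_{ij}²`. Parseval and `e^x - 1 ≥ x²/2` give
the lower bound. For the upper bound, Bonami's inequality
`E f^(2k) ≤ (∑_S (2k-1)^|S| f̂(S)²)^k`, proved by induction on the dimension of the cube from the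
two-point inequality and Minkowski's inequality, bounds the even moments of a polynomial of degree
two by `(2k)! (e² ∑ a²)^k`; summing the series of `cosh` and using `e^|x| ≤ cosh 2x + 1/2` then
gives `E (e^(|X|/L) - 1) ≤ 1` for `L = 10 (∑ a²)^(1/2)`.
-/

open Finset Real
open scoped Nat

section Walsh

variable {α : Type*} [DecidableEq α]

def walshChar (S T : Finset α) : ℝ := (-1) ^ #(S ∩ T)

def walshPoly (s : Finset α) (c : Finset α → ℝ) (T : Finset α) : ℝ :=
  ∑ S ∈ s.powerset, c S * walshChar S T

variable {a : α} {s S S' T : Finset α} {c : Finset α → ℝ}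

lemma walshChar_comm (S T : Finset α) : walshChar S T = walshChar T S := by
  rw [walshChar, walshChar, inter_comm]

lemma walshChar_insert_of_notMem (ha : a ∉ T) : walshChar (insert a S) T = walshChar S T := by
  rw [walshChar, walshChar, insert_inter_of_notMem ha]

lemma walshChar_insert_insert (ha : a ∉ S) :
    walshChar (insert a S) (insert a T) = -walshChar S T := by
  rw [walshChar, walshChar, ← insert_inter_distrib,
    card_insert_of_notMem fun h => ha (mem_inter.1 h).1, pow_succ, mul_neg_one]

lemma walshChar_union (h : Disjoint S S') :
    walshChar (S ∪ S') T = walshChar S T * walshChar S' T := by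
  rw [walshChar, walshChar, walshChar, union_inter_distrib_right,
    card_union_of_disjoint (h.mono inter_subset_left inter_subset_left), pow_add]

lemma walshChar_inter_of_subset (hT : T ⊆ s) : walshChar (S ∩ s) T = walshChar S T := by
  rw [walshChar, walshChar, inter_assoc, inter_eq_right.2 hT]

lemma walshChar_singleton (a : α) (T : Finset α) :
    walshChar {a} T = if a ∈ T then -1 else 1 := by
  unfold walshChar
  split_ifs with h <;> simp [h]

lemma walshPoly_insert_of_notMem (ha : a ∉ s) (hT : a ∉ T) :
    walshPoly (insert a s) c T = walshPoly s c T + walshPoly s (fun S => c (insert a S)) T := by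
  simp only [walshPoly, sum_powerset_insert ha, walshChar_insert_of_notMem hT]

lemma walshPoly_insert_insert (ha : a ∉ s) :
    walshPoly (insert a s) c (insert a T) =
      walshPoly s c T - walshPoly s (fun S => c (insert a S)) T := by
  rw [walshPoly, sum_powerset_insert ha, walshPoly, walshPoly, sub_eq_add_neg, ← sum_neg_distrib]
  congr 1 <;> refine sum_congr rfl fun S hS => ?_
  · have haS : a ∉ S := fun h => ha (mem_powerset.1 hS h)
    rw [walshChar_comm, walshChar_insert_of_notMem haS, walshChar_comm]
  · rw [walshChar_insert_insert fun h => ha (mem_powerset.1 hS h), mul_neg]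

lemma sum_powerset_insert_walshPoly (ha : a ∉ s) (F : ℝ → ℝ) :
    ∑ T ∈ (insert a s).powerset, F (walshPoly (insert a s) c T) =
      ∑ T ∈ s.powerset, (F (walshPoly s c T + walshPoly s (fun S => c (insert a S)) T) +
        F (walshPoly s c T - walshPoly s (fun S => c (insert a S)) T)) := by
  rw [sum_powerset_insert ha, ← sum_add_distrib]
  refine sum_congr rfl fun T hT => ?_
  rw [walshPoly_insert_of_notMem ha fun h => ha (mem_powerset.1 hT h), walshPoly_insert_insert ha]

theorem sum_powerset_walshPoly_sq (s : Finset α) (c : Finset α → ℝ) :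
    ∑ T ∈ s.powerset, walshPoly s c T ^ 2 = 2 ^ #s * ∑ S ∈ s.powerset, c S ^ 2 := by
  induction s using Finset.induction_on generalizing c with
  | empty => simp [walshPoly, walshChar]
  | insert a s ha ih =>
    have parallelogram (x y : ℝ) : (x + y) ^ 2 + (x - y) ^ 2 = 2 * x ^ 2 + 2 * y ^ 2 := by ring
    rw [sum_powerset_insert_walshPoly ha (· ^ 2), sum_powerset_insert ha, card_insert_of_notMem ha]
    simp only [parallelogram, sum_add_distrib, ← mul_sum, ih]
    ring

end Walsh

section Bonami

lemma choose_two_mul_two_mul_le (m : ℕ) : ∀ j ≤ m, (2 * m).choose (2 * j) ≤ m.choose j * (2 * m - 1) ^ j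
  | 0, _ => by simp
  | j + 1, hj => by
    have ih := choose_two_mul_two_mul_le m j (by omega)
    have h₁ := Nat.choose_succ_right_eq (2 * m) (2 * j)
    have h₂ := Nat.choose_succ_right_eq (2 * m) (2 * j + 1)
    have h₃ := Nat.choose_succ_right_eq m j
    have hlin : 2 * m - (2 * j + 1) ≤ (2 * m - 1) * (2 * j + 1) :=
      (Nat.sub_le_sub_left (by omega) _).trans (Nat.le_mul_of_pos_right _ (by omega))
    refine Nat.le_of_mul_le_mul_right (c := (2 * j + 2) * (2 * j + 1)) ?_ (by positivity)
    calc (2 * m).choose (2 * (j + 1)) * ((2 * j + 2) * (2 * j + 1))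
        = (2 * m).choose (2 * j) * (2 * (m - j) * (2 * m - (2 * j + 1))) := by
          rw [show 2 * m - 2 * j = 2 * (m - j) by omega] at h₁
          rw [show 2 * (j + 1) = 2 * j + 1 + 1 by ring, ← mul_assoc, h₂, mul_right_comm, h₁]
          ring
      _ ≤ m.choose j * (2 * m - 1) ^ j * (2 * (m - j) * ((2 * m - 1) * (2 * j + 1))) := by
          gcongr
      _ = m.choose j * (m - j) * (2 * m - 1) ^ (j + 1) * (2 * (2 * j + 1)) := by ring
      _ = m.choose (j + 1) * (2 * m - 1) ^ (j + 1) * ((2 * j + 2) * (2 * j + 1)) := by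
          rw [← h₃]
          ring

lemma sum_range_two_mul_add_one {M : Type*} [AddCommMonoid M] (f : ℕ → M) (m : ℕ) :
    ∑ k ∈ range (2 * m + 1), f k =
      ∑ j ∈ range (m + 1), f (2 * j) + ∑ j ∈ range m, f (2 * j + 1) := by
  induction m with
  | zero => simp
  | succ m ih =>
    rw [show 2 * (m + 1) + 1 = 2 * m + 1 + 1 + 1 by ring, sum_range_succ, sum_range_succ, ih,
      sum_range_succ (fun j => f (2 * j)) (m + 1), sum_range_succ (fun j => f (2 * j + 1)) m,
      show 2 * (m + 1) = 2 * m + 1 + 1 by ring]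
    abel

lemma add_pow_add_sub_pow_le (x y : ℝ) (m : ℕ) :
    (x + y) ^ (2 * m) + (x - y) ^ (2 * m) ≤ 2 * (x ^ 2 + (2 * m - 1) * y ^ 2) ^ m := by
  rcases eq_or_ne m 0 with rfl | hm
  · norm_num
  have expand : (x + y) ^ (2 * m) + (x - y) ^ (2 * m) =
      2 * ∑ j ∈ range (m + 1), (y ^ 2) ^ j * (x ^ 2) ^ (m - j) * ((2 * m).choose (2 * j) : ℝ) := by
    rw [add_comm x, sub_eq_neg_add, add_pow, add_pow, ← sum_add_distrib, sum_range_two_mul_add_one,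
      mul_sum]
    have hodd : ∀ j ∈ range m, y ^ (2 * j + 1) * x ^ (2 * m - (2 * j + 1)) *
        ((2 * m).choose (2 * j + 1) : ℝ) + (-y) ^ (2 * j + 1) * x ^ (2 * m - (2 * j + 1)) *
        ((2 * m).choose (2 * j + 1) : ℝ) = 0 := fun j _ => by
      rw [Odd.neg_pow (odd_two_mul_add_one j)]; ring
    rw [sum_eq_zero hodd, add_zero]
    refine sum_congr rfl fun j hj => ?_
    rw [Even.neg_pow (even_two_mul j), pow_mul, show 2 * m - 2 * j = 2 * (m - j) by omega, pow_mul]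
    ring
  rw [expand, add_comm (x ^ 2), add_pow]
  refine mul_le_mul_of_nonneg_left (sum_le_sum fun j hj => ?_) zero_le_two
  have hchoose : ((2 * m).choose (2 * j) : ℝ) ≤ (2 * m - 1) ^ j * m.choose j := by
    have h := Nat.cast_le (α := ℝ) |>.2
      (choose_two_mul_two_mul_le m j (by simpa [Nat.lt_succ_iff] using hj))
    rwa [Nat.cast_mul, Nat.cast_pow, Nat.cast_sub (by omega), Nat.cast_mul, Nat.cast_ofNat,
      Nat.cast_one, mul_comm ((m.choose j : ℕ) : ℝ)] at h
  calc (y ^ 2) ^ j * (x ^ 2) ^ (m - j) * ((2 * m).choose (2 * j) : ℝ)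
      ≤ (y ^ 2) ^ j * (x ^ 2) ^ (m - j) * ((2 * m - 1) ^ j * m.choose j) := by gcongr
    _ = ((2 * m - 1) * y ^ 2) ^ j * (x ^ 2) ^ (m - j) * m.choose j := by rw [mul_pow]; ring

lemma sum_add_pow_le_of_sum_pow_le {ι : Type*} {s : Finset ι} {u v : ι → ℝ} {m : ℕ} {W A B : ℝ}
    (hm : m ≠ 0) (hu : ∀ i ∈ s, 0 ≤ u i) (hv : ∀ i ∈ s, 0 ≤ v i) (hW : 0 ≤ W) (hA : 0 ≤ A)
    (hB : 0 ≤ B) (huA : ∑ i ∈ s, u i ^ m ≤ W * A ^ m) (hvB : ∑ i ∈ s, v i ^ m ≤ W * B ^ m) :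
    ∑ i ∈ s, (u i + v i) ^ m ≤ W * (A + B) ^ m := by
  have hp : (1 : ℝ) ≤ m := by exact_mod_cast Nat.one_le_iff_ne_zero.2 hm
  have root {f : ι → ℝ} {C : ℝ} (hf : ∀ i ∈ s, 0 ≤ f i) (hC : 0 ≤ C)
      (hfC : ∑ i ∈ s, f i ^ m ≤ W * C ^ m) :
      (∑ i ∈ s, f i ^ (m : ℝ)) ^ (1 / (m : ℝ)) ≤ W ^ (m⁻¹ : ℝ) * C := by
    simp_rw [Real.rpow_natCast, one_div]
    calc (∑ i ∈ s, f i ^ m) ^ (m⁻¹ : ℝ) ≤ (W * C ^ m) ^ (m⁻¹ : ℝ) :=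
          Real.rpow_le_rpow (sum_nonneg fun i hi => pow_nonneg (hf i hi) m) hfC (by positivity)
      _ = W ^ (m⁻¹ : ℝ) * C := by
          rw [Real.mul_rpow hW (pow_nonneg hC m), Real.pow_rpow_inv_natCast hC hm]
  have minkowski := (Real.Lp_add_le_of_nonneg s hp hu hv).trans
    (add_le_add (root hu hA huA) (root hv hB hvB))
  have huv : 0 ≤ ∑ i ∈ s, (u i + v i) ^ m :=
    sum_nonneg fun i hi => pow_nonneg (add_nonneg (hu i hi) (hv i hi)) m
  simp_rw [Real.rpow_natCast, one_div, ← mul_add] at minkowski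
  calc ∑ i ∈ s, (u i + v i) ^ m = ((∑ i ∈ s, (u i + v i) ^ m) ^ (m⁻¹ : ℝ)) ^ m :=
        (Real.rpow_inv_natCast_pow huv hm).symm
    _ ≤ (W ^ (m⁻¹ : ℝ) * (A + B)) ^ m := pow_le_pow_left₀ (by positivity) minkowski m
    _ = W * (A + B) ^ m := by rw [mul_pow, Real.rpow_inv_natCast_pow hW hm]

lemma sum_powerset_pow_card_mul_sq_le {α : Type*} {κ : ℝ} {d : ℕ} {c : Finset α → ℝ} (hκ : 1 ≤ κ)
    (hc : ∀ S, d < #S → c S = 0) (s : Finset α) :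
    ∑ S ∈ s.powerset, κ ^ #S * c S ^ 2 ≤ κ ^ d * ∑ S ∈ s.powerset, c S ^ 2 := by
  rw [mul_sum]
  refine sum_le_sum fun S _ => ?_
  rcases le_or_gt #S d with h | h
  · exact mul_le_mul_of_nonneg_right (pow_le_pow_right₀ hκ h) (sq_nonneg _)
  · simp [hc S h]

variable {α : Type*} [DecidableEq α]

theorem sum_powerset_walshPoly_pow_le {m : ℕ} (hm : m ≠ 0) (s : Finset α) (c : Finset α → ℝ) :
    ∑ T ∈ s.powerset, walshPoly s c T ^ (2 * m) ≤
      2 ^ #s * (∑ S ∈ s.powerset, (2 * m - 1 : ℝ) ^ #S * c S ^ 2) ^ m := by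
  have hκ : (1 : ℝ) ≤ 2 * m - 1 := by
    have : (1 : ℝ) ≤ m := by exact_mod_cast Nat.one_le_iff_ne_zero.2 hm
    linarith
  induction s using Finset.induction_on generalizing c with
  | empty => simp [walshPoly, walshChar, pow_mul]
  | insert a s ha ih =>
    set κ : ℝ := 2 * m - 1
    set g := walshPoly s c
    set h := walshPoly s (fun S => c (insert a S))
    have hg : ∑ T ∈ s.powerset, (g T ^ 2) ^ m ≤
        2 ^ #s * (∑ S ∈ s.powerset, κ ^ #S * c S ^ 2) ^ m := by
      simpa only [← pow_mul] using ih c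
    have hh : ∑ T ∈ s.powerset, (κ * h T ^ 2) ^ m ≤
        2 ^ #s * (κ * ∑ S ∈ s.powerset, κ ^ #S * c (insert a S) ^ 2) ^ m := by
      simp only [mul_pow, ← pow_mul, ← mul_sum]
      rw [mul_left_comm]
      exact mul_le_mul_of_nonneg_left (ih _) (by positivity)
    have hsplit : ∑ S ∈ (insert a s).powerset, κ ^ #S * c S ^ 2 =
        ∑ S ∈ s.powerset, κ ^ #S * c S ^ 2 + κ * ∑ S ∈ s.powerset, κ ^ #S * c (insert a S) ^ 2 := by
      rw [sum_powerset_insert ha, mul_sum]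
      congr 1
      refine sum_congr rfl fun S hS => ?_
      rw [card_insert_of_notMem fun h => ha (mem_powerset.1 hS h), pow_succ']
      ring
    rw [sum_powerset_insert_walshPoly ha (· ^ (2 * m)), hsplit, card_insert_of_notMem ha, pow_succ',
      mul_assoc]
    calc ∑ T ∈ s.powerset, ((g T + h T) ^ (2 * m) + (g T - h T) ^ (2 * m))
        ≤ ∑ T ∈ s.powerset, 2 * (g T ^ 2 + κ * h T ^ 2) ^ m :=
          sum_le_sum fun T _ => add_pow_add_sub_pow_le _ _ _
      _ = 2 * ∑ T ∈ s.powerset, (g T ^ 2 + κ * h T ^ 2) ^ m := (mul_sum ..).symm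
      _ ≤ _ := by
          refine mul_le_mul_of_nonneg_left (sum_add_pow_le_of_sum_pow_le hm (fun _ _ => sq_nonneg _)
            (fun _ _ => by positivity) (by positivity) (sum_nonneg fun _ _ => by positivity)
            (by positivity) hg hh) zero_le_two

theorem sum_powerset_walshPoly_pow_le_factorial {c : Finset α → ℝ} (hc : ∀ S, 2 < #S → c S = 0)
    (s : Finset α) (k : ℕ) :
    ∑ T ∈ s.powerset, walshPoly s c T ^ (2 * k) ≤
      2 ^ #s * (2 * k)! * (exp 1 ^ 2 * ∑ S ∈ s.powerset, c S ^ 2) ^ k := by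
  rcases eq_or_ne k 0 with rfl | hk
  · simp
  set Q := ∑ S ∈ s.powerset, c S ^ 2
  have hQ : 0 ≤ Q := sum_nonneg fun _ _ => sq_nonneg _
  have hκ : (1 : ℝ) ≤ 2 * k - 1 := by
    have : (1 : ℝ) ≤ k := by exact_mod_cast Nat.one_le_iff_ne_zero.2 hk
    linarith
  have hfact : (2 * k - 1 : ℝ) ^ (2 * k) ≤ (2 * k)! * exp 1 ^ (2 * k) := by
    have h := Real.pow_div_factorial_le_exp ((2 * k : ℕ) : ℝ) (by positivity) (2 * k)
    rw [div_le_iff₀ (by positivity), ← Real.exp_one_pow] at h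
    refine (pow_le_pow_left₀ (by linarith) ?_ _).trans (h.trans_eq (mul_comm _ _))
    push_cast
    linarith
  calc ∑ T ∈ s.powerset, walshPoly s c T ^ (2 * k)
      ≤ 2 ^ #s * (∑ S ∈ s.powerset, (2 * k - 1 : ℝ) ^ #S * c S ^ 2) ^ k :=
        sum_powerset_walshPoly_pow_le hk s c
    _ ≤ 2 ^ #s * ((2 * k - 1 : ℝ) ^ 2 * Q) ^ k := by
        refine mul_le_mul_of_nonneg_left
          (pow_le_pow_left₀ ?_ (sum_powerset_pow_card_mul_sq_le hκ hc s) k) (by positivity)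
        exact sum_nonneg fun _ _ => mul_nonneg (by positivity) (sq_nonneg _)
    _ = 2 ^ #s * (2 * k - 1 : ℝ) ^ (2 * k) * Q ^ k := by rw [mul_pow, ← pow_mul]; ring
    _ ≤ 2 ^ #s * ((2 * k)! * exp 1 ^ (2 * k)) * Q ^ k := by gcongr
    _ = 2 ^ #s * (2 * k)! * (exp 1 ^ 2 * Q) ^ k := by rw [mul_pow, ← pow_mul]; ring

end Bonami

section Exponential

lemma sum_cosh_le_of_sum_pow_div_factorial_le {ι : Type*} {s : Finset ι} {y : ι → ℝ} {W q : ℝ}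
    (hq₀ : 0 ≤ q) (hq₁ : q < 1) (h : ∀ k, ∑ i ∈ s, y i ^ (2 * k) / (2 * k)! ≤ W * q ^ k) :
    ∑ i ∈ s, cosh (y i) ≤ W / (1 - q) :=
  hasSum_le h (hasSum_sum fun i _ => Real.hasSum_cosh (y i))
    ((hasSum_geometric_of_lt_one hq₀ hq₁).mul_left W)

lemma exp_abs_sub_one_le_cosh_two_mul_sub_half (x : ℝ) : exp |x| - 1 ≤ cosh (2 * x) - 1 / 2 := by
  have hcosh : exp (2 * |x|) / 2 ≤ cosh (2 * x) := by
    rw [← cosh_abs, abs_mul, abs_two, cosh_eq]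
    linarith [exp_pos (-(2 * |x|))]
  have hsq : exp (2 * |x|) = exp |x| ^ 2 := by rw [← exp_nat_mul]; norm_num
  nlinarith [sq_nonneg (exp |x| - 1)]

variable {α : Type*} [DecidableEq α] {s : Finset α} {c : Finset α → ℝ}

theorem sum_cosh_mul_walshPoly_le (hc : ∀ S, 2 < #S → c S = 0) {μ : ℝ}
    (hμ : μ ^ 2 * (exp 1 ^ 2 * ∑ S ∈ s.powerset, c S ^ 2) < 1) :
    ∑ T ∈ s.powerset, cosh (μ * walshPoly s c T) ≤
      2 ^ #s / (1 - μ ^ 2 * (exp 1 ^ 2 * ∑ S ∈ s.powerset, c S ^ 2)) := by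
  refine sum_cosh_le_of_sum_pow_div_factorial_le (by positivity) hμ fun k => ?_
  simp_rw [mul_pow μ, pow_mul μ, ← sum_div, ← mul_sum,
    div_le_iff₀ (by positivity : (0 : ℝ) < (2 * k)!)]
  calc (μ ^ 2) ^ k * ∑ T ∈ s.powerset, walshPoly s c T ^ (2 * k)
      ≤ (μ ^ 2) ^ k * (2 ^ #s * (2 * k)! * (exp 1 ^ 2 * ∑ S ∈ s.powerset, c S ^ 2) ^ k) :=
        mul_le_mul_of_nonneg_left (sum_powerset_walshPoly_pow_le_factorial hc s k) (by positivity)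
    _ = _ := by rw [mul_pow]; ring

theorem sum_exp_abs_walshPoly_sub_one_le (hc : ∀ S, 2 < #S → c S = 0) {L : ℝ} (hL : 0 < L)
    (hQL : 100 * ∑ S ∈ s.powerset, c S ^ 2 ≤ L ^ 2) :
    ∑ T ∈ s.powerset, (exp (|walshPoly s c T| / L) - 1) ≤ 2 ^ #s := by
  set Q := ∑ S ∈ s.powerset, c S ^ 2
  have hq : (2 / L) ^ 2 * (exp 1 ^ 2 * Q) ≤ 1 / 3 := by
    have he : exp 1 ^ 2 ≤ 25 / 3 := by nlinarith [exp_one_lt_d9, exp_pos 1]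
    have hQ : 0 ≤ Q := sum_nonneg fun _ _ => sq_nonneg _
    rw [div_pow, div_mul_eq_mul_div, div_le_iff₀ (by positivity)]
    nlinarith [mul_le_mul_of_nonneg_right he hQ]
  have hcosh := sum_cosh_mul_walshPoly_le hc (μ := 2 / L) (hq.trans_lt (by norm_num))
  have h2 : (0 : ℝ) < 2 ^ #s := by positivity
  calc ∑ T ∈ s.powerset, (exp (|walshPoly s c T| / L) - 1)
      ≤ ∑ T ∈ s.powerset, (cosh (2 / L * walshPoly s c T) - 1 / 2) := by
        refine sum_le_sum fun T _ => ?_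
        simpa only [abs_div, abs_of_pos hL, mul_div_assoc', div_mul_eq_mul_div] using
          exp_abs_sub_one_le_cosh_two_mul_sub_half (walshPoly s c T / L)
    _ = ∑ T ∈ s.powerset, cosh (2 / L * walshPoly s c T) - 2 ^ #s / 2 := by
        rw [sum_sub_distrib, sum_const, card_powerset, nsmul_eq_mul]; push_cast; ring
    _ ≤ 2 ^ #s / (1 - (2 / L) ^ 2 * (exp 1 ^ 2 * Q)) - 2 ^ #s / 2 := sub_le_sub_right hcosh _
    _ ≤ 2 ^ #s := by
        rw [sub_le_iff_le_add, div_le_iff₀ (by linarith)]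
        nlinarith

theorem sum_walshPoly_sq_div_le_sum_exp_abs_sub_one (s : Finset α) (c : Finset α → ℝ) {l : ℝ}
    (hl : 0 < l) :
    2 ^ #s * (∑ S ∈ s.powerset, c S ^ 2) / (2 * l ^ 2) ≤
      ∑ T ∈ s.powerset, (exp (|walshPoly s c T| / l) - 1) := by
  rw [← sum_powerset_walshPoly_sq, sum_div]
  refine sum_le_sum fun T _ => ?_
  have h := Real.quadratic_le_exp_of_nonneg (div_nonneg (abs_nonneg (walshPoly s c T)) hl.le)
  rw [div_pow, sq_abs] at h
  have : walshPoly s c T ^ 2 / (2 * l ^ 2) = walshPoly s c T ^ 2 / l ^ 2 / 2 := by ring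
  linarith [div_nonneg (abs_nonneg (walshPoly s c T)) hl.le]

end Exponential

section Orlicz

lemma expOrliczNorm_le {x : ℝ → ℝ} {l : ℝ} (hl : 0 < l)
    (h : ∫ t in Set.Icc (0 : ℝ) 1, (exp (|x t| / l) - 1) ≤ 1) : expOrliczNorm x ≤ l :=
  csInf_le ⟨0, fun _ hl' => hl'.1.le⟩ ⟨hl, h⟩

lemma le_expOrliczNorm {x : ℝ → ℝ} {b : ℝ}
    (hne : ∃ l, 0 < l ∧ ∫ t in Set.Icc (0 : ℝ) 1, (exp (|x t| / l) - 1) ≤ 1)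
    (h : ∀ l, 0 < l → ∫ t in Set.Icc (0 : ℝ) 1, (exp (|x t| / l) - 1) ≤ 1 → b ≤ l) :
    b ≤ expOrliczNorm x :=
  le_csInf hne fun l hl => h l hl.1 hl.2

variable {α : Type*} [DecidableEq α]

def HasWalshLaw (X : ℝ → ℝ) (s : Finset α) (c : Finset α → ℝ) : Prop :=
  ∀ F : ℝ → ℝ, ∫ t in Set.Icc (0 : ℝ) 1, F (X t) = (∑ T ∈ s.powerset, F (walshPoly s c T)) / 2 ^ #s

variable {s : Finset α} {c : Finset α → ℝ} {X : ℝ → ℝ}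

lemma HasWalshLaw.integral_exp_abs_sub_one_le (hX : HasWalshLaw X s c)
    (hc : ∀ S, 2 < #S → c S = 0) {L : ℝ} (hL₀ : 0 < L)
    (hL : 10 * √(∑ S ∈ s.powerset, c S ^ 2) ≤ L) :
    ∫ t in Set.Icc (0 : ℝ) 1, (exp (|X t| / L) - 1) ≤ 1 := by
  rw [hX fun u => exp (|u| / L) - 1, div_le_one (by positivity)]
  refine sum_exp_abs_walshPoly_sub_one_le hc hL₀ ?_
  have hsq := pow_le_pow_left₀ (by positivity) hL 2
  rw [mul_pow, sq_sqrt (sum_nonneg fun _ _ => sq_nonneg _)] at hsq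
  linarith

theorem HasWalshLaw.expOrliczNorm_le (hX : HasWalshLaw X s c) (hc : ∀ S, 2 < #S → c S = 0) :
    expOrliczNorm X ≤ 10 * √(∑ S ∈ s.powerset, c S ^ 2) :=
  le_of_forall_gt_imp_ge_of_dense fun L hL =>
    have hL₀ : 0 < L := (by positivity : (0 : ℝ) ≤ 10 * √_).trans_lt hL
    _root_.expOrliczNorm_le hL₀ (hX.integral_exp_abs_sub_one_le hc hL₀ hL.le)

theorem HasWalshLaw.le_expOrliczNorm (hX : HasWalshLaw X s c) (hc : ∀ S, 2 < #S → c S = 0) :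
    10⁻¹ * √(∑ S ∈ s.powerset, c S ^ 2) ≤ expOrliczNorm X := by
  set Q := ∑ S ∈ s.powerset, c S ^ 2
  refine _root_.le_expOrliczNorm ⟨10 * √Q + 1, by positivity,
    hX.integral_exp_abs_sub_one_le hc (by positivity) (by linarith)⟩ fun l hl h => ?_
  rw [hX fun u => exp (|u| / l) - 1, div_le_one (by positivity)] at h
  have hQ : Q ≤ 2 * l ^ 2 := by
    have := (sum_walshPoly_sq_div_le_sum_exp_abs_sub_one s c hl).trans h
    rw [div_le_iff₀ (by positivity)] at this
    nlinarith [pow_pos (two_pos (α := ℝ)) #s]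
  rw [inv_mul_le_iff₀ (by norm_num), sqrt_le_iff]
  exact ⟨by positivity, by nlinarith⟩

end Orlicz

section Dyadic

lemma comp_natFloor_eqOn_Ioo (G : ℕ → ℝ) (j : ℕ) :
    Set.EqOn (fun u : ℝ => G ⌊u⌋₊) (fun _ => G j) (Set.Ioo j (j + 1)) := fun u hu => by
  simp only [(Nat.floor_eq_iff (j.cast_nonneg.trans hu.1.le)).2 ⟨hu.1.le, hu.2⟩]

lemma intervalIntegrable_comp_natFloor (G : ℕ → ℝ) (j : ℕ) :
    IntervalIntegrable (fun u => G ⌊u⌋₊) volume j (j + 1) := by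
  rw [intervalIntegrable_iff_integrableOn_Ioo_of_le (by linarith)]
  exact (integrableOn_const (by simp) (by simp)).congr_fun (comp_natFloor_eqOn_Ioo G j).symm
    measurableSet_Ioo

lemma intervalIntegral_comp_natFloor (G : ℕ → ℝ) (j : ℕ) :
    ∫ u in (j : ℝ)..(j + 1), G ⌊u⌋₊ = G j := by
  rw [intervalIntegral.integral_of_le (by linarith), integral_Ioc_eq_integral_Ioo,
    setIntegral_congr_fun measurableSet_Ioo (comp_natFloor_eqOn_Ioo G j)]
  simp

lemma setIntegral_Icc_comp_natFloor_mul (G : ℕ → ℝ) {m : ℕ} (hm : m ≠ 0) :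
    ∫ t in Set.Icc (0 : ℝ) 1, G ⌊m * t⌋₊ = (∑ j ∈ range m, G j) / m := by
  have hadj := intervalIntegral.sum_integral_adjacent_intervals (f := fun u => G ⌊u⌋₊)
    (μ := volume) (a := fun j : ℕ => (j : ℝ)) (n := m)
    fun j _ => by simpa using intervalIntegrable_comp_natFloor G j
  simp only [Nat.cast_zero, Nat.cast_add, Nat.cast_one, intervalIntegral_comp_natFloor] at hadj
  rw [integral_Icc_eq_integral_Ioc, ← intervalIntegral.integral_of_le zero_le_one,
    intervalIntegral.integral_comp_mul_left (fun u => G ⌊u⌋₊) (Nat.cast_ne_zero.2 hm), mul_zero,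
    mul_one, ← hadj, smul_eq_mul, inv_mul_eq_div]

lemma sum_range_two_pow_comp_bitIndices {M : Type*} [AddCommMonoid M] (N : ℕ) (G : Finset ℕ → M) :
    ∑ J ∈ range (2 ^ N), G J.bitIndices.toFinset = ∑ T ∈ (range N).powerset, G T := by
  refine sum_nbij' (fun J => J.bitIndices.toFinset) (fun T => ∑ i ∈ T, 2 ^ i) (fun J hJ => ?_)
    (fun T hT => ?_) (fun J _ => sum_toFinset_bitIndices_two_pow J)
    (fun T _ => toFinset_bitIndices_sum_two_pow T) (fun _ _ => rfl)
  · rw [mem_range] at hJ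
    refine mem_powerset.2 fun b hb => ?_
    rw [List.mem_toFinset, Nat.mem_bitIndices] at hb
    exact mem_range.2 ((Nat.pow_lt_pow_iff_right (by norm_num)).1
      ((Nat.ge_two_pow_of_testBit hb).trans_lt hJ))
  · exact mem_range.2 (Nat.geomSum_lt le_rfl fun k hk => mem_range.1 (mem_powerset.1 hT hk))

lemma rademacher_eq_walshChar {N k : ℕ} {t : ℝ} (ht : 0 ≤ t) (hk : 1 ≤ k) (hkN : k ≤ N + 1) :
    rademacher k t = walshChar {N + 1 - k} (⌊2 ^ N * t⌋₊).bitIndices.toFinset := by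
  have hfloor : ⌊(2 : ℝ) ^ (k - 1) * t⌋ = ((⌊2 ^ N * t⌋₊ / 2 ^ (N + 1 - k) : ℕ) : ℤ) := by
    have hscale : (2 : ℝ) ^ (k - 1) * t = 2 ^ N * t / (2 ^ (N + 1 - k) : ℕ) := by
      rw [Nat.cast_pow, Nat.cast_ofNat, _root_.eq_div_iff (by positivity), mul_right_comm,
        ← pow_add, show k - 1 + (N + 1 - k) = N by omega]
    rw [← Int.natCast_floor_eq_floor (by positivity), hscale, Nat.floor_div_natCast]
  rw [rademacher, hfloor, zpow_natCast, neg_one_pow_eq_pow_mod_two]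
  simp only [walshChar_singleton, List.mem_toFinset, Nat.mem_bitIndices,
    Nat.testBit_eq_decide_div_mod_eq]
  rcases Nat.mod_two_eq_zero_or_one (⌊2 ^ N * t⌋₊ / 2 ^ (N + 1 - k)) with h | h <;> simp [h]

end Dyadic

section FiberSum

variable {ι α : Type*} [DecidableEq α] {P : Finset ι} {e : ι → Finset α} {s : Finset α}

def fiberSum (P : Finset ι) (e : ι → Finset α) (a : ι → ℝ) (S : Finset α) : ℝ :=
  ∑ p ∈ P with e p = S, a p

lemma walshPoly_fiberSum (he : ∀ p ∈ P, e p ⊆ s) (a : ι → ℝ) (T : Finset α) :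
    walshPoly s (fiberSum P e a) T = ∑ p ∈ P, a p * walshChar (e p) T := by
  rw [walshPoly, ← sum_fiberwise_of_maps_to (fun p hp => mem_powerset.2 (he p hp))]
  refine sum_congr rfl fun S _ => ?_
  rw [fiberSum, sum_mul]
  exact sum_congr rfl fun p hp => by rw [(mem_filter.1 hp).2]

lemma sum_powerset_fiberSum_sq (he : ∀ p ∈ P, e p ⊆ s) (hinj : Set.InjOn e P) (a : ι → ℝ) :
    ∑ S ∈ s.powerset, fiberSum P e a S ^ 2 = ∑ p ∈ P, a p ^ 2 := by
  rw [← sum_fiberwise_of_maps_to (fun p hp => mem_powerset.2 (he p hp)) (fun p => a p ^ 2)]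
  refine sum_congr rfl fun S _ => ?_
  obtain hempty | ⟨p, hp⟩ := (P.filter (e · = S)).eq_empty_or_nonempty
  · simp [fiberSum, hempty]
  have hsingle : P.filter (e · = S) = {p} := by
    refine eq_singleton_iff_unique_mem.2 ⟨hp, fun q hq => ?_⟩
    rw [mem_filter] at hp hq
    exact hinj hq.1 hp.1 (hq.2.trans hp.2.symm)
  rw [fiberSum, hsingle, sum_singleton, sum_singleton]

lemma fiberSum_eq_zero_of_card_lt {d : ℕ} (he : ∀ p ∈ P, #(e p) ≤ d) (a : ι → ℝ) {S : Finset α}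
    (hS : d < #S) : fiberSum P e a S = 0 :=
  sum_eq_zero fun p hp => by
    obtain ⟨hpP, rfl⟩ := mem_filter.1 hp
    exact absurd (he p hpP) (by omega)

end FiberSum

section Chaos

def chaosPairs (n : ℕ) : Finset (Σ _ : ℕ, ℕ) := (Icc 1 n).sigma fun i => Ioc i n

/-- For `t ∈ [0, 1)`, `r k t = (-1)^d` with `d` the binary digit `n - k` of `⌊2^(n-1) t⌋`, so
`r i * r j` is the Walsh character of `{n - i, n - j}`; digit `n - 1` is always `0` (`r 1 = 1`)
and is dropped. -/
def digitPair (n : ℕ) (p : Σ _ : ℕ, ℕ) : Finset ℕ := {n - p.1, n - p.2} ∩ range (n - 1)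

noncomputable def chaosCoeff (n : ℕ) (a : ℕ → ℕ → ℝ) : Finset ℕ → ℝ :=
  fiberSum (chaosPairs n) (digitPair n) fun p => a p.1 p.2

lemma digitPair_injOn (n : ℕ) : Set.InjOn (digitPair n) (chaosPairs n) := by
  rintro ⟨i, j⟩ hp ⟨i', j'⟩ hp' h
  simp only [chaosPairs, coe_sigma, Set.mem_sigma_iff, coe_Icc, Set.mem_Icc, coe_Ioc,
    Set.mem_Ioc] at hp hp'
  have hmem (x : ℕ) := congrArg (x ∈ ·) h
  simp only [digitPair, mem_inter, mem_insert, mem_singleton, mem_range, eq_iff_iff] at hmem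
  have := hmem (n - i); have := hmem (n - j); have := hmem (n - i'); have := hmem (n - j')
  obtain ⟨rfl, rfl⟩ : i = i' ∧ j = j' := by omega
  rfl

lemma chaosCoeff_eq_zero_of_two_lt_card {n : ℕ} {a : ℕ → ℕ → ℝ} {S : Finset ℕ} (hS : 2 < #S) :
    chaosCoeff n a S = 0 :=
  fiberSum_eq_zero_of_card_lt (fun _ _ => (card_le_card inter_subset_left).trans card_le_two) _ hS

lemma sum_powerset_chaosCoeff_sq (n : ℕ) (a : ℕ → ℕ → ℝ) :
    ∑ S ∈ (range (n - 1)).powerset, chaosCoeff n a S ^ 2 =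
      ∑ i ∈ Icc 1 n, ∑ j ∈ Ioc i n, a i j ^ 2 := by
  rw [chaosCoeff, chaosPairs, sum_sigma']
  exact sum_powerset_fiberSum_sq (e := digitPair n) (fun _ _ => inter_subset_right)
    (digitPair_injOn n) _

theorem hasWalshLaw_chaos (n : ℕ) (a : ℕ → ℕ → ℝ) :
    HasWalshLaw (fun t => ∑ i ∈ Icc 1 n, ∑ j ∈ Ioc i n, a i j * (rademacher i t * rademacher j t))
      (range (n - 1)) (chaosCoeff n a) := by
  intro F
  set Ψ : Finset ℕ → ℝ := fun T => ∑ p ∈ chaosPairs n, a p.1 p.2 * walshChar {n - p.1, n - p.2} T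
  have hdigits {t : ℝ} (ht : 0 ≤ t) :
      ∑ i ∈ Icc 1 n, ∑ j ∈ Ioc i n, a i j * (rademacher i t * rademacher j t) =
        Ψ (⌊((2 ^ (n - 1) : ℕ) : ℝ) * t⌋₊).bitIndices.toFinset := by
    rw [sum_sigma']
    refine sum_congr rfl fun p hp => ?_
    simp only [chaosPairs, mem_sigma, mem_Icc, mem_Ioc] at hp
    rw [rademacher_eq_walshChar (N := n - 1) ht hp.1.1 (by omega),
      rademacher_eq_walshChar (N := n - 1) ht (by omega) (by omega),
      ← walshChar_union (disjoint_singleton.2 (by omega)), ← insert_eq,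
      show n - 1 + 1 - p.1 = n - p.1 by omega, show n - 1 + 1 - p.2 = n - p.2 by omega]
    push_cast
    rfl
  rw [setIntegral_congr_fun measurableSet_Icc fun t ht => congrArg F (hdigits ht.1),
    setIntegral_Icc_comp_natFloor_mul (fun J => F (Ψ J.bitIndices.toFinset)) (by positivity),
    sum_range_two_pow_comp_bitIndices (n - 1) fun T => F (Ψ T), card_range]
  push_cast
  congr 1
  refine sum_congr rfl fun T hT => ?_
  rw [chaosCoeff, walshPoly_fiberSum (e := digitPair n) fun _ _ => inter_subset_right]
  simp only [Ψ, digitPair, walshChar_inter_of_subset (mem_powerset.1 hT)]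

end Chaos

/-- The Rademacher chaos of order 2 is equivalent, in the exponential Orlicz
space `L_M` with `M(t) = e^t − 1`, to the canonical basis of `ℓ²`. -/
theorem chaos_expOrlicz_equiv_l2 :
    ∃ C : ℝ, 1 ≤ C ∧ ∀ n : ℕ, 2 ≤ n → ∀ a : ℕ → ℕ → ℝ,
      C⁻¹ * Real.sqrt (∑ i ∈ Finset.Icc 1 n, ∑ j ∈ Finset.Ioc i n, a i j ^ 2) ≤
          expOrliczNorm (fun t => ∑ i ∈ Finset.Icc 1 n, ∑ j ∈ Finset.Ioc i n,
            a i j * (rademacher i t * rademacher j t)) ∧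
        expOrliczNorm (fun t => ∑ i ∈ Finset.Icc 1 n, ∑ j ∈ Finset.Ioc i n,
            a i j * (rademacher i t * rademacher j t)) ≤
          C * Real.sqrt (∑ i ∈ Finset.Icc 1 n, ∑ j ∈ Finset.Ioc i n, a i j ^ 2) := by
  refine ⟨10, by norm_num, fun n _ a => ?_⟩
  have hdeg : ∀ S, 2 < #S → chaosCoeff n a S = 0 := fun _ => chaosCoeff_eq_zero_of_two_lt_card
  rw [← sum_powerset_chaosCoeff_sq]
  exact ⟨(hasWalshLaw_chaos n a).le_expOrliczNorm hdeg,
    (hasWalshLaw_chaos n a).expOrliczNorm_le hdeg⟩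
end
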